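/- arXiv:1905.09870 — 6 statements merged into one kernel-verified Lean document; each statement's English description precedes it below -/
import Mathlib

section
/- Suppose the neural tangent kernel Gram matrix H^∞ satisfies H^∞ ⪰ λ₀ I_n for some λ₀ > 0 and that ‖σ′‖_∞ ≤ K₁. Then there exists a measurable map v: ℝ^d → {w ∈ ℝ^d : ‖w‖₂ ≤ 1} such that for every i ∈ {1, …, n}, y_i ∫ σ′(θᵀx_i)·x_iᵀv(θ) dμ₀(θ) ≥ λ₀/(n K₁). -/
open MeasureTheory Real Finset
open scoped RealInnerProductSpace BigOperators

noncomputable section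

/-- Two-layer network `f_Θ(x) = m^{-β} ∑_r a_r σ(θ_rᵀ x)`. -/
def fnet (d m : ℕ) (β : ℝ) (σ : ℝ → ℝ) (a : Fin m → ℝ)
    (Θ : Fin m → EuclideanSpace ℝ (Fin d)) (x : EuclideanSpace ℝ (Fin d)) : ℝ :=
  (m : ℝ) ^ (-β) * ∑ r, a r * σ ⟪Θ r, x⟫

/-- Functional-gradient value `g_Θ(x_i) = -y_i/(1+exp(y_i f_Θ(x_i)))`. -/
def gval (d m n : ℕ) (β : ℝ) (σ : ℝ → ℝ) (a : Fin m → ℝ)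
    (x : Fin n → EuclideanSpace ℝ (Fin d)) (y : Fin n → ℝ)
    (Θ : Fin m → EuclideanSpace ℝ (Fin d)) (i : Fin n) : ℝ :=
  - y i / (1 + Real.exp (y i * fnet d m β σ a Θ (x i)))

/-- Empirical logistic loss `L(Θ)`. -/
def eloss (d m n : ℕ) (β : ℝ) (σ : ℝ → ℝ) (a : Fin m → ℝ)
    (x : Fin n → EuclideanSpace ℝ (Fin d)) (y : Fin n → ℝ)
    (Θ : Fin m → EuclideanSpace ℝ (Fin d)) : ℝ :=
  (1 / n : ℝ) * ∑ i, Real.log (1 + Real.exp (- y i * fnet d m β σ a Θ (x i)))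

/-- `L¹(ν_n)`-norm of the functional gradient. -/
def L1norm (d m n : ℕ) (β : ℝ) (σ : ℝ → ℝ) (a : Fin m → ℝ)
    (x : Fin n → EuclideanSpace ℝ (Fin d)) (y : Fin n → ℝ)
    (Θ : Fin m → EuclideanSpace ℝ (Fin d)) : ℝ :=
  (1 / n : ℝ) * ∑ i, |gval d m n β σ a x y Θ i|

/-- Parameter gradient `∇_Θ L(Θ)`. -/
def gradL (d m n : ℕ) (β : ℝ) (σ : ℝ → ℝ) (a : Fin m → ℝ)
    (x : Fin n → EuclideanSpace ℝ (Fin d)) (y : Fin n → ℝ)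
    (Θ : Fin m → EuclideanSpace ℝ (Fin d)) : Fin m → EuclideanSpace ℝ (Fin d) :=
  fun r => (1 / n : ℝ) • ∑ i,
    (gval d m n β σ a x y Θ i * (a r * (m : ℝ) ^ (-β) * deriv σ ⟪Θ r, x i⟫)) • x i

/-- Squared Euclidean norm of a parameter block `‖Θ‖₂²`. -/
def nsq (d m : ℕ) (Θ : Fin m → EuclideanSpace ℝ (Fin d)) : ℝ := ∑ r, ‖Θ r‖ ^ 2

/-- Euclidean norm of a parameter block `‖Θ‖₂`. -/
def en2 (d m : ℕ) (Θ : Fin m → EuclideanSpace ℝ (Fin d)) : ℝ := Real.sqrt (nsq d m Θ)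

/-- The `(2,1)`-norm `‖Θ‖_{2,1} = ∑_r ‖θ_r‖₂`. -/
def n21 (d m : ℕ) (Θ : Fin m → EuclideanSpace ℝ (Fin d)) : ℝ := ∑ r, ‖Θ r‖

/-- Gradient-descent iterates `Θ^{(t+1)} = Θ^{(t)} - η ∇_Θ L(Θ^{(t)})`. -/
def gdSeq (d m n : ℕ) (β : ℝ) (σ : ℝ → ℝ) (a : Fin m → ℝ)
    (x : Fin n → EuclideanSpace ℝ (Fin d)) (y : Fin n → ℝ) (η : ℝ)
    (Θ0 : Fin m → EuclideanSpace ℝ (Fin d)) : ℕ → Fin m → EuclideanSpace ℝ (Fin d)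
  | 0 => Θ0
  | t + 1 => fun r => gdSeq d m n β σ a x y η Θ0 t r
      - η • gradL d m n β σ a x y (gdSeq d m n β σ a x y η Θ0 t) r

/-- Kernel-smoothing quantity `Q(Θ) = ‖(1/n) ∑_i g_Θ(x_i) ∇_Θ f_Θ(x_i)‖₂²`. -/
def Qker (d m n : ℕ) (β : ℝ) (σ : ℝ → ℝ) (a : Fin m → ℝ)
    (x : Fin n → EuclideanSpace ℝ (Fin d)) (y : Fin n → ℝ)
    (Θ : Fin m → EuclideanSpace ℝ (Fin d)) : ℝ :=
  nsq d m (fun r => (1 / n : ℝ) • ∑ i,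
    (gval d m n β σ a x y Θ i * (a r * (m : ℝ) ^ (-β) * deriv σ ⟪Θ r, x i⟫)) • x i)

/-- Symmetric signs: `a_r = 1` for `r < k`, `a_r = -1` for `r ≥ k` (with `m = 2k`). -/
def symSigns (k : ℕ) : Fin (2 * k) → ℝ := fun r => if (r : ℕ) < k then 1 else -1

/-- Symmetric initialization: `θ^{(0)}_{r+k} = θ^{(0)}_r` (with `m = 2k`). -/
def symInit (d k : ℕ) (ω : Fin k → EuclideanSpace ℝ (Fin d)) :
    Fin (2 * k) → EuclideanSpace ℝ (Fin d) :=
  fun r => if h : (r : ℕ) < k then ω ⟨r, h⟩ else ω ⟨(r : ℕ) - k, by have := r.isLt; omega⟩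

/-- Ramp loss with margin `γ`. -/
def ramp (γ v : ℝ) : ℝ := if v < 0 then 1 else if v ≤ γ then 1 - v / γ else 0

/-- Empirical Rademacher complexity of the ramp-loss class over the ball of radius `D`
around `Θ0`. -/
def rade (d m n : ℕ) (β γ D : ℝ) (σ : ℝ → ℝ) (a : Fin m → ℝ)
    (x : Fin n → EuclideanSpace ℝ (Fin d)) (y : Fin n → ℝ)
    (Θ0 : Fin m → EuclideanSpace ℝ (Fin d)) : ℝ :=
  (1 / n : ℝ) * (1 / 2 ^ n : ℝ) * ∑ ε : Fin n → Bool,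
    sSup {z : ℝ | ∃ Θ : Fin m → EuclideanSpace ℝ (Fin d),
      en2 d m (fun r => Θ r - Θ0 r) ≤ D ∧
      z = ∑ i, (if ε i then (1 : ℝ) else -1) * ramp γ (y i * fnet d m β σ a Θ (x i))}

/-- Neural tangent kernel. -/
def kNTK (d : ℕ) (σ : ℝ → ℝ) (μ₀ : Measure (EuclideanSpace ℝ (Fin d)))
    (x x' : EuclideanSpace ℝ (Fin d)) : ℝ :=
  ∫ θ, deriv σ ⟪θ, x⟫ * deriv σ ⟪θ, x'⟫ * ⟪x, x'⟫ ∂μ₀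

/-!
Write `Φ_i(θ) = σ′(θᵀx_i) x_i`, so that `H^∞` is the Gram matrix of the `Φ_i` in `L²(μ₀; ℝ^d)`.
Coercivity makes `H^∞` invertible; let `H^∞ ξ = y`. Testing coercivity on `ξ` gives
`λ‖ξ‖₂² ≤ ⟨ξ, y⟩ ≤ ‖ξ‖₁ ≤ √n ‖ξ‖₂`, hence `‖ξ‖₁ ≤ n/λ`. The field
`v = λ/(n K₁) · ∑_j ξ_j Φ_j` is then pointwise of norm at most `λ/(n K₁) · K₁ · ‖ξ‖₁ ≤ 1`, and
`∫ ⟨Φ_i, v⟩ dμ₀ = λ/(n K₁) · (H^∞ ξ)_i = λ/(n K₁) · y_i`.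
-/

open Matrix

namespace Matrix

variable {ι : Type*} [Fintype ι] {M : Matrix ι ι ℝ} {lam : ℝ}

theorem mulVec_surjective_of_coercive (hlam : 0 < lam)
    (hM : ∀ ξ, lam * (ξ ⬝ᵥ ξ) ≤ ξ ⬝ᵥ M *ᵥ ξ) : Function.Surjective M.mulVec := by
  classical
  refine mulVec_surjective_iff_isUnit.mpr (mulVec_injective_iff_isUnit.mp fun a b hab => ?_)
  have hzero : M *ᵥ (a - b) = 0 := by rw [mulVec_sub, hab, sub_self]
  have hsq : (a - b) ⬝ᵥ (a - b) ≤ 0 :=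
    nonpos_of_mul_nonpos_right (by simpa [hzero] using hM (a - b)) hlam
  exact sub_eq_zero.mp (dotProduct_self_eq_zero.mp (hsq.antisymm (dotProduct_self_star_nonneg _)))

theorem sum_abs_le_of_coercive (hlam : 0 < lam)
    (hM : ∀ ξ, lam * (ξ ⬝ᵥ ξ) ≤ ξ ⬝ᵥ M *ᵥ ξ) {ξ y : ι → ℝ} (hξ : M *ᵥ ξ = y)
    (hy : ∀ i, |y i| ≤ 1) : ∑ j, |ξ j| ≤ Fintype.card ι / lam := by
  set S := ∑ j, |ξ j|
  have hS : 0 ≤ S := sum_nonneg fun j _ => abs_nonneg _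
  have hquad : lam * (ξ ⬝ᵥ ξ) ≤ S := by
    refine (hM ξ).trans ?_
    rw [hξ]
    refine sum_le_sum fun j _ => ?_
    calc ξ j * y j ≤ |ξ j * y j| := le_abs_self _
      _ ≤ |ξ j| := by rw [abs_mul]; exact mul_le_of_le_one_right (abs_nonneg _) (hy j)
  have hcs : S ^ 2 ≤ Fintype.card ι * (ξ ⬝ᵥ ξ) := by
    simpa [S, dotProduct, sq_abs, ← sq] using
      sq_sum_le_card_mul_sum_sq (s := univ) (f := fun j => |ξ j|)
  have hn : (0 : ℝ) ≤ Fintype.card ι := Nat.cast_nonneg _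
  have hSS : S * (S * lam) ≤ S * Fintype.card ι := by
    nlinarith [mul_le_mul_of_nonneg_left hcs hlam.le, mul_le_mul_of_nonneg_left hquad hn]
  rw [le_div_iff₀ hlam]
  rcases hS.eq_or_lt with hS0 | hSpos
  · rw [← hS0, zero_mul]; exact hn
  · exact le_of_mul_le_mul_left hSS hSpos

end Matrix

section IntegralGram

variable {Ω E ι : Type*} [MeasurableSpace Ω] [NormedAddCommGroup E] [InnerProductSpace ℝ E]
  [Fintype ι]

def integralGram (μ : Measure Ω) (Φ : ι → Ω → E) : Matrix ι ι ℝ :=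
  Matrix.of fun i j => ∫ θ, ⟪Φ i θ, Φ j θ⟫ ∂μ

theorem integral_inner_sum_smul {μ : Measure Ω} {Φ : ι → Ω → E} {i : ι}
    (hΦ : ∀ j, Integrable (fun θ => ⟪Φ i θ, Φ j θ⟫) μ) (ξ : ι → ℝ) :
    ∫ θ, ⟪Φ i θ, ∑ j, ξ j • Φ j θ⟫ ∂μ = (integralGram μ Φ *ᵥ ξ) i := by
  simp only [inner_sum, real_inner_smul_right]
  rw [integral_finsetSum _ fun j _ => (hΦ j).const_mul (ξ j)]
  simp only [integral_const_mul, mulVec, dotProduct, integralGram, of_apply, mul_comm]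

theorem norm_sum_smul_le {a : ι → ℝ} {u : ι → E} {B : ℝ} (hu : ∀ j, ‖u j‖ ≤ B) :
    ‖∑ j, a j • u j‖ ≤ (∑ j, |a j|) * B := by
  rw [sum_mul]
  refine (norm_sum_le _ _).trans (sum_le_sum fun j _ => ?_)
  rw [norm_smul, Real.norm_eq_abs]
  exact mul_le_mul_of_nonneg_left (hu j) (abs_nonneg _)

variable [MeasurableSpace E] [BorelSpace E] [SecondCountableTopology E]

theorem exists_measurable_margin_of_integralGram_coercive {μ : Measure Ω} [IsFiniteMeasure μ]
    {Φ : ι → Ω → E} {B lam : ℝ} (hΦ : ∀ j, Measurable (Φ j)) (hΦB : ∀ j θ, ‖Φ j θ‖ ≤ B)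
    (hB : 0 ≤ B) (hlam : 0 < lam)
    (hM : ∀ ξ, lam * (ξ ⬝ᵥ ξ) ≤ ξ ⬝ᵥ integralGram μ Φ *ᵥ ξ) {y : ι → ℝ}
    (hy : ∀ i, y i = 1 ∨ y i = -1) :
    ∃ v : Ω → E, Measurable v ∧ (∀ θ, ‖v θ‖ ≤ 1) ∧
      ∀ i, lam / (Fintype.card ι * B) ≤ y i * ∫ θ, ⟪Φ i θ, v θ⟫ ∂μ := by
  have hy1 : ∀ i, |y i| = 1 := fun i => by rcases hy i with h | h <;> simp [h]
  obtain ⟨ξ, hξ⟩ := mulVec_surjective_of_coercive hlam hM y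
  have hξ1 := sum_abs_le_of_coercive hlam hM hξ fun i => (hy1 i).le
  set c := lam / (Fintype.card ι * B)
  have hc : 0 ≤ c := by positivity
  have hinner : ∀ i j, Integrable (fun θ => ⟪Φ i θ, Φ j θ⟫) μ := fun i j =>
    .of_bound ((hΦ i).inner (hΦ j)).aestronglyMeasurable (B * B) (.of_forall fun θ =>
      (norm_inner_le_norm _ _).trans (mul_le_mul (hΦB i θ) (hΦB j θ) (norm_nonneg _) hB))
  refine ⟨fun θ => ∑ j, (c • ξ) j • Φ j θ, by fun_prop, fun θ => ?_, fun i => ?_⟩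
  · calc ‖∑ j, (c • ξ) j • Φ j θ‖ ≤ (∑ j, |(c • ξ) j|) * B := norm_sum_smul_le (hΦB · θ)
      _ = c * ((∑ j, |ξ j|) * B) := by
        simp only [Pi.smul_apply, smul_eq_mul, abs_mul, abs_of_nonneg hc, ← mul_sum]; ring
      _ ≤ c * (Fintype.card ι / lam * B) := by gcongr
      _ = (lam * (Fintype.card ι * B)) / (lam * (Fintype.card ι * B)) := by ring
      _ ≤ 1 := div_self_le_one _
  · have hyy : y i * y i = 1 := by rw [← abs_mul_abs_self, hy1, one_mul]
    rw [integral_inner_sum_smul (hinner i), mulVec_smul, hξ, Pi.smul_apply, smul_eq_mul]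
    exact le_of_eq (by linear_combination -c * hyy)

end IntegralGram

section NTK

variable {E : Type*} [NormedAddCommGroup E] [InnerProductSpace ℝ E]

def ntkFeature (σ : ℝ → ℝ) (x θ : E) : E := deriv σ ⟪θ, x⟫ • x

theorem measurable_ntkFeature [MeasurableSpace E] [BorelSpace E] (σ : ℝ → ℝ) (x : E) :
    Measurable (ntkFeature σ x) :=
  (continuous_id.smul continuous_const).measurable.comp
    ((measurable_deriv σ).comp (continuous_id.inner continuous_const).measurable)

theorem norm_ntkFeature_le {σ : ℝ → ℝ} {K : ℝ} (hσ : ∀ z, |deriv σ z| ≤ K) {x : E}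
    (hx : ‖x‖ ≤ 1) (θ : E) : ‖ntkFeature σ x θ‖ ≤ K := by
  rw [ntkFeature, norm_smul, Real.norm_eq_abs]
  calc |deriv σ ⟪θ, x⟫| * ‖x‖ ≤ K * 1 :=
        mul_le_mul (hσ _) hx (norm_nonneg _) ((abs_nonneg _).trans (hσ 0))
    _ = K := mul_one K

theorem kNTK_eq_integralGram {d n : ℕ} (σ : ℝ → ℝ) (μ₀ : Measure (EuclideanSpace ℝ (Fin d)))
    (x : Fin n → EuclideanSpace ℝ (Fin d)) (i j : Fin n) :
    kNTK d σ μ₀ (x i) (x j) = integralGram μ₀ (fun k => ntkFeature σ (x k)) i j := by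
  simp only [kNTK, integralGram, Matrix.of_apply, ntkFeature, real_inner_smul_left,
    real_inner_smul_right]
  congr 1 with θ
  ring

end NTK

theorem ntk_positivity_implies_separability_general
    (d n : ℕ)
    (σ : ℝ → ℝ) (K₁ : ℝ)
    (hK₁ : ∀ z, |deriv σ z| ≤ K₁)
    (x : Fin n → EuclideanSpace ℝ (Fin d)) (y : Fin n → ℝ)
    (hx : ∀ i, ‖x i‖ ≤ 1) (hy : ∀ i, y i = 1 ∨ y i = -1)
    (μ₀ : Measure (EuclideanSpace ℝ (Fin d))) [IsProbabilityMeasure μ₀]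
    (lam : ℝ) (hlam : 0 < lam)
    (hGram : ∀ ξ : Fin n → ℝ,
      lam * ∑ i, ξ i ^ 2 ≤ ∑ i, ∑ j, ξ i * kNTK d σ μ₀ (x i) (x j) * ξ j) :
    ∃ v : EuclideanSpace ℝ (Fin d) → EuclideanSpace ℝ (Fin d),
      Measurable v ∧ (∀ θ, ‖v θ‖ ≤ 1) ∧
      ∀ i, lam / (n * K₁) ≤ y i * ∫ θ, deriv σ ⟪θ, x i⟫ * ⟪x i, v θ⟫ ∂μ₀ := by
  have hcoercive : ∀ ξ, lam * (ξ ⬝ᵥ ξ) ≤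
      ξ ⬝ᵥ integralGram μ₀ (fun i => ntkFeature σ (x i)) *ᵥ ξ := fun ξ => by
    simpa [dotProduct, mulVec, ← kNTK_eq_integralGram, mul_sum, sq, mul_assoc] using hGram ξ
  obtain ⟨v, hv, hv1, hmargin⟩ := exists_measurable_margin_of_integralGram_coercive
    (fun i => measurable_ntkFeature σ (x i)) (fun i => norm_ntkFeature_le hK₁ (hx i))
    ((abs_nonneg _).trans (hK₁ 0)) hlam hcoercive hy
  refine ⟨v, hv, hv1, fun i => ?_⟩
  simpa [ntkFeature, real_inner_smul_left] using hmargin i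

/-- Proposition 1-(i): positivity of the NTK Gram matrix implies
separability with margin `lam/(nK₁)`. -/
theorem ntk_positivity_implies_separability
    (d n : ℕ) (hn : 0 < n)
    (σ : ℝ → ℝ) (K₁ : ℝ) (hσ : Differentiable ℝ σ) (hK₁pos : 0 < K₁)
    (hK₁ : ∀ z, |deriv σ z| ≤ K₁)
    (x : Fin n → EuclideanSpace ℝ (Fin d)) (y : Fin n → ℝ)
    (hx : ∀ i, ‖x i‖ ≤ 1) (hy : ∀ i, y i = 1 ∨ y i = -1)
    (μ₀ : Measure (EuclideanSpace ℝ (Fin d))) [IsProbabilityMeasure μ₀]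
    (lam : ℝ) (hlam : 0 < lam)
    (hGram : ∀ ξ : Fin n → ℝ,
      lam * ∑ i, ξ i ^ 2 ≤ ∑ i, ∑ j, ξ i * kNTK d σ μ₀ (x i) (x j) * ξ j) :
    ∃ v : EuclideanSpace ℝ (Fin d) → EuclideanSpace ℝ (Fin d),
      Measurable v ∧ (∀ θ, ‖v θ‖ ≤ 1) ∧
      ∀ i, lam / (n * K₁) ≤ y i * ∫ θ, deriv σ ⟪θ, x i⟫ * ⟪x i, v θ⟫ ∂μ₀ :=
  ntk_positivity_implies_separability_general d n σ K₁ hK₁ x y hx hy μ₀ lam hlam hGram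
end
end

section
/- Suppose there exist ρ > 0 and a measurable map v: ℝ^d → {w ∈ ℝ^d : ‖w‖₂ ≤ 1} such that y_i ∫ σ′(θᵀx_i)·x_iᵀv(θ) dμ₀(θ) ≥ ρ for every i ∈ {1, …, n}. Then for every vector ξ ∈ ℝ^n of the form ξ = (α_i y_i)_{i=1}^n with all α_i ≥ 0, one has ξᵀ H^∞ ξ = Σ_{i,j=1}^n ξ_i k_NTK(x_i, x_j) ξ_j ≥ ρ²‖ξ‖₂². -/
/-! With the features `Φᵢ(θ) = σ′(θᵀxᵢ) xᵢ`, the quadratic form `ξᵀ H^∞ ξ` is the mean of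
`‖∑ᵢ ξᵢ Φᵢ(θ)‖²`. Testing `∑ᵢ ξᵢ Φᵢ(θ)` against the unit-bounded field `v(θ)` and applying
Jensen bounds it below by `(∑ᵢ αᵢ yᵢ 𝔼⟪Φᵢ, v⟫)² ≥ ρ² (∑ᵢ αᵢ)² ≥ ρ² ‖ξ‖²`. -/

open MeasureTheory Real Finset
open scoped RealInnerProductSpace BigOperators

noncomputable section

section FeatureKernel

variable {Ω ι E : Type*} [MeasurableSpace Ω] {μ : Measure Ω} [Fintype ι]
  [NormedAddCommGroup E] [InnerProductSpace ℝ E]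

theorem integrable_inner_of_memLp_two {f g : Ω → E} (hf : MemLp f 2 μ) (hg : MemLp g 2 μ) :
    Integrable (fun θ => ⟪f θ, g θ⟫) μ :=
  (hf.norm.integrable_mul hg.norm).mono' (hf.1.inner hg.1)
    (ae_of_all _ fun θ => norm_inner_le_norm (f θ) (g θ))

theorem sum_mul_integral_inner_mul_eq_integral_norm_sq (Φ : ι → Ω → E)
    (hΦ : ∀ i, MemLp (Φ i) 2 μ) (ξ : ι → ℝ) :
    ∑ i, ∑ j, ξ i * (∫ θ, ⟪Φ i θ, Φ j θ⟫ ∂μ) * ξ j = ∫ θ, ‖∑ i, ξ i • Φ i θ‖ ^ 2 ∂μ := by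
  have hint : ∀ i j, Integrable (fun θ => ξ i * ⟪Φ i θ, Φ j θ⟫ * ξ j) μ := fun i j =>
    ((integrable_inner_of_memLp_two (hΦ i) (hΦ j)).const_mul _).mul_const _
  have hpoint : ∀ θ, ‖∑ i, ξ i • Φ i θ‖ ^ 2 = ∑ i, ∑ j, ξ i * ⟪Φ i θ, Φ j θ⟫ * ξ j := by
    intro θ
    simp only [← real_inner_self_eq_norm_sq, sum_inner, inner_sum, real_inner_smul_left,
      real_inner_smul_right]
    exact sum_congr rfl fun i _ => sum_congr rfl fun j _ => by rw [real_inner_comm]; ring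
  simp_rw [hpoint]
  rw [integral_finsetSum _ fun i _ => integrable_finsetSum _ fun j _ => hint i j]
  refine sum_congr rfl fun i _ => ?_
  rw [integral_finsetSum _ fun j _ => hint i j]
  exact sum_congr rfl fun j _ => by rw [integral_mul_const, integral_const_mul]

theorem sq_integral_le_integral_sq [IsProbabilityMeasure μ] {g : Ω → ℝ} (hg : MemLp g 2 μ) :
    (∫ θ, g θ ∂μ) ^ 2 ≤ ∫ θ, g θ ^ 2 ∂μ := by
  have h := ProbabilityTheory.variance_nonneg g μ
  rw [ProbabilityTheory.variance_eq_sub hg] at h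
  simpa only [Pi.pow_apply, sub_nonneg] using h

theorem sq_integral_inner_le_integral_norm_sq [IsProbabilityMeasure μ] {F v : Ω → E}
    (hF : MemLp F 2 μ) (hv : ∀ θ, ‖v θ‖ ≤ 1) :
    (∫ θ, ⟪F θ, v θ⟫ ∂μ) ^ 2 ≤ ∫ θ, ‖F θ‖ ^ 2 ∂μ := by
  have hle : ∀ θ, ‖⟪F θ, v θ⟫‖ ≤ ‖F θ‖ := fun θ =>
    (norm_inner_le_norm _ _).trans (mul_le_of_le_one_right (norm_nonneg _) (hv θ))
  calc (∫ θ, ⟪F θ, v θ⟫ ∂μ) ^ 2 = ‖∫ θ, ⟪F θ, v θ⟫ ∂μ‖ ^ 2 := (sq_abs _).symm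
    _ ≤ (∫ θ, ‖F θ‖ ∂μ) ^ 2 := pow_le_pow_left₀ (norm_nonneg _)
      (norm_integral_le_of_norm_le (hF.integrable one_le_two).norm (ae_of_all _ hle)) 2
    _ ≤ ∫ θ, ‖F θ‖ ^ 2 ∂μ := sq_integral_le_integral_sq hF.norm

theorem sq_sum_mul_integral_inner_le [IsProbabilityMeasure μ] (Φ : ι → Ω → E)
    (hΦ : ∀ i, MemLp (Φ i) 2 μ) {v : Ω → E} (hv_meas : AEStronglyMeasurable v μ)
    (hv : ∀ θ, ‖v θ‖ ≤ 1) (ξ : ι → ℝ) :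
    (∑ i, ξ i * ∫ θ, ⟪Φ i θ, v θ⟫ ∂μ) ^ 2 ≤
      ∑ i, ∑ j, ξ i * (∫ θ, ⟪Φ i θ, Φ j θ⟫ ∂μ) * ξ j := by
  have hv2 : MemLp v 2 μ := MemLp.of_bound hv_meas 1 (ae_of_all _ hv)
  have hF : MemLp (fun θ => ∑ i, ξ i • Φ i θ) 2 μ :=
    memLp_finsetSum _ fun i _ => (hΦ i).const_smul (ξ i)
  calc (∑ i, ξ i * ∫ θ, ⟪Φ i θ, v θ⟫ ∂μ) ^ 2
        = (∫ θ, ⟪∑ i, ξ i • Φ i θ, v θ⟫ ∂μ) ^ 2 := by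
          simp_rw [sum_inner, real_inner_smul_left]
          rw [integral_finsetSum _ fun i _ =>
            (integrable_inner_of_memLp_two (hΦ i) hv2).const_mul _]
          simp_rw [integral_const_mul]
    _ ≤ ∫ θ, ‖∑ i, ξ i • Φ i θ‖ ^ 2 ∂μ := sq_integral_inner_le_integral_norm_sq hF hv
    _ = _ := (sum_mul_integral_inner_mul_eq_integral_norm_sq Φ hΦ ξ).symm

theorem sq_mul_sum_sq_le_sq_sum_mul {ρ : ℝ} (hρ : 0 ≤ ρ) {α y s : ι → ℝ}
    (hα : ∀ i, 0 ≤ α i) (hy : ∀ i, y i = 1 ∨ y i = -1) (hs : ∀ i, ρ ≤ y i * s i) :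
    ρ ^ 2 * ∑ i, (α i * y i) ^ 2 ≤ (∑ i, α i * y i * s i) ^ 2 := by
  have hsq : ∑ i, (α i * y i) ^ 2 = ∑ i, α i ^ 2 :=
    sum_congr rfl fun i _ => by rcases hy i with h | h <;> simp [h]
  have hlin : ρ * ∑ i, α i ≤ ∑ i, α i * y i * s i := by
    rw [mul_sum]
    exact sum_le_sum fun i _ => by
      nlinarith [mul_le_mul_of_nonneg_left (hs i) (hα i)]
  calc ρ ^ 2 * ∑ i, (α i * y i) ^ 2 ≤ ρ ^ 2 * (∑ i, α i) ^ 2 := by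
        rw [hsq]
        exact mul_le_mul_of_nonneg_left (sum_sq_le_sq_sum_of_nonneg fun i _ => hα i) (sq_nonneg ρ)
    _ = (ρ * ∑ i, α i) ^ 2 := (mul_pow _ _ _).symm
    _ ≤ _ := pow_le_pow_left₀ (mul_nonneg hρ (sum_nonneg fun i _ => hα i)) hlin 2

end FeatureKernel

theorem kNTK_eq_integral_inner (d : ℕ) (σ : ℝ → ℝ) (μ₀ : Measure (EuclideanSpace ℝ (Fin d)))
    (x x' : EuclideanSpace ℝ (Fin d)) :
    kNTK d σ μ₀ x x' = ∫ θ, ⟪deriv σ ⟪θ, x⟫ • x, deriv σ ⟪θ, x'⟫ • x'⟫ ∂μ₀ := by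
  simp_rw [kNTK, real_inner_smul_left, real_inner_smul_right, mul_assoc]

theorem memLp_deriv_inner_smul {d : ℕ} {σ : ℝ → ℝ} {K₁ : ℝ} (hK₁ : ∀ z, |deriv σ z| ≤ K₁)
    (μ₀ : Measure (EuclideanSpace ℝ (Fin d))) [IsFiniteMeasure μ₀] (x : EuclideanSpace ℝ (Fin d))
    (p : ENNReal) : MemLp (fun θ => deriv σ ⟪θ, x⟫ • x) p μ₀ := by
  have hmeas : Measurable fun θ : EuclideanSpace ℝ (Fin d) => deriv σ ⟪θ, x⟫ :=
    (measurable_deriv σ).comp (continuous_id.inner continuous_const).measurable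
  refine MemLp.of_bound (hmeas.smul_const x).aestronglyMeasurable (K₁ * ‖x‖)
    (ae_of_all _ fun θ => ?_)
  rw [norm_smul, Real.norm_eq_abs]
  exact mul_le_mul_of_nonneg_right (hK₁ _) (norm_nonneg x)

theorem separability_implies_ntk_positivity_on_cone_general
    (d n : ℕ)
    (σ : ℝ → ℝ) (K₁ : ℝ)
    (hK₁ : ∀ z, |deriv σ z| ≤ K₁)
    (x : Fin n → EuclideanSpace ℝ (Fin d)) (y : Fin n → ℝ)
    (hy : ∀ i, y i = 1 ∨ y i = -1)
    (μ₀ : Measure (EuclideanSpace ℝ (Fin d))) [IsProbabilityMeasure μ₀]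
    (ρ : ℝ) (hρ : 0 < ρ)
    (v : EuclideanSpace ℝ (Fin d) → EuclideanSpace ℝ (Fin d))
    (hv_meas : Measurable v) (hv_norm : ∀ θ, ‖v θ‖ ≤ 1)
    (hsep : ∀ i, ρ ≤ y i * ∫ θ, deriv σ ⟪θ, x i⟫ * ⟪x i, v θ⟫ ∂μ₀)
    (α : Fin n → ℝ) (hα : ∀ i, 0 ≤ α i) :
    ρ ^ 2 * ∑ i, (α i * y i) ^ 2 ≤
      ∑ i, ∑ j, (α i * y i) * kNTK d σ μ₀ (x i) (x j) * (α j * y j) := by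
  set Φ : Fin n → EuclideanSpace ℝ (Fin d) → EuclideanSpace ℝ (Fin d) :=
    fun i θ => deriv σ ⟪θ, x i⟫ • x i
  have hsepΦ : ∀ i, ρ ≤ y i * ∫ θ, ⟪Φ i θ, v θ⟫ ∂μ₀ := by
    simpa only [Φ, real_inner_smul_left] using hsep
  calc ρ ^ 2 * ∑ i, (α i * y i) ^ 2
        ≤ (∑ i, α i * y i * ∫ θ, ⟪Φ i θ, v θ⟫ ∂μ₀) ^ 2 :=
          sq_mul_sum_sq_le_sq_sum_mul hρ.le hα hy hsepΦ
    _ ≤ ∑ i, ∑ j, (α i * y i) * (∫ θ, ⟪Φ i θ, Φ j θ⟫ ∂μ₀) * (α j * y j) :=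
          sq_sum_mul_integral_inner_le Φ (fun i => memLp_deriv_inner_smul hK₁ μ₀ (x i) 2)
            hv_meas.aestronglyMeasurable hv_norm _
    _ = _ := by simp_rw [kNTK_eq_integral_inner, Φ]

/-- Proposition 1-(ii): separability implies positivity of the NTK Gram
matrix on the cone spanned by the labels. -/
theorem separability_implies_ntk_positivity_on_cone
    (d n : ℕ) (hn : 0 < n)
    (σ : ℝ → ℝ) (K₁ : ℝ) (hσ : Differentiable ℝ σ)
    (hK₁ : ∀ z, |deriv σ z| ≤ K₁)
    (x : Fin n → EuclideanSpace ℝ (Fin d)) (y : Fin n → ℝ)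
    (hx : ∀ i, ‖x i‖ ≤ 1) (hy : ∀ i, y i = 1 ∨ y i = -1)
    (μ₀ : Measure (EuclideanSpace ℝ (Fin d))) [IsProbabilityMeasure μ₀]
    (ρ : ℝ) (hρ : 0 < ρ)
    (v : EuclideanSpace ℝ (Fin d) → EuclideanSpace ℝ (Fin d))
    (hv_meas : Measurable v) (hv_norm : ∀ θ, ‖v θ‖ ≤ 1)
    (hsep : ∀ i, ρ ≤ y i * ∫ θ, deriv σ ⟪θ, x i⟫ * ⟪x i, v θ⟫ ∂μ₀)
    (α : Fin n → ℝ) (hα : ∀ i, 0 ≤ α i) :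
    ρ ^ 2 * ∑ i, (α i * y i) ^ 2 ≤
      ∑ i, ∑ j, (α i * y i) * kNTK d σ μ₀ (x i) (x j) * (α j * y j) :=
  separability_implies_ntk_positivity_on_cone_general d n σ K₁ hK₁ x y hy μ₀ ρ hρ v hv_meas hv_norm
    hsep α hα
end
end

section
/- Let β ∈ [0,1), set K = K₁² + 2K₂ + K₁²K₂², and suppose 0 < η ≤ m^β. For any Θ ∈ (ℝ^d)^m, let Θ⁺ = Θ − η∇_Θ L(Θ). Then | L(Θ⁺) − ( L(Θ) − η·Q(Θ) ) | ≤ (η² K/(2 m^{2β−1}))·‖∇_Θ L(Θ)‖₂², where Q(Θ) = ⟨∇_f L(f_Θ), T_{k_Θ}∇_f L(f_Θ)⟩_{L₂(ν_n^X)} = ‖(1/n) Σ_{i=1}^n g_Θ(x_i)·∇_Θ f_Θ(x_i)‖₂². -/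
open MeasureTheory Real Finset
open scoped RealInnerProductSpace BigOperators

noncomputable section

/-!
Write `Δ = -η ∇_Θ L(Θ)` and `φ(t) = L(Θ + tΔ)`. Since `Q(Θ)` is exactly `‖∇_Θ L(Θ)‖²`, we have
`φ'(0) = ⟨∇_Θ L(Θ), Δ⟩ = -η Q(Θ)`, so the claim bounds the first-order Taylor remainder
`|φ(1) - φ(0) - φ'(0)|`, which is at most half a Lipschitz constant of `φ'`.
Now `φ'(t)` is the average over the sample of `g(f(x_i)) · ∂_Δ f(x_i)` at `Θ + tΔ`. The logistic
factor `g = -y · sigmoid(-y ·)` is bounded by 1 and `1/4`-Lipschitz, while the directional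
derivative `∂_Δ f` of the network is bounded by `S = K₁ m^{-β} ∑_r ‖Δ_r‖` and is
`K₂ m^{-β} ‖Δ‖²`-Lipschitz in `t`; so `φ'` is `(S²/4 + K₂ m^{-β} ‖Δ‖²)`-Lipschitz. Cauchy–Schwarz,
`(∑_r ‖Δ_r‖)² ≤ m ‖Δ‖²`, and `m^{-β} ≤ m^{1-2β}` turn this into the stated constant.
-/

lemma abs_sub_le_of_hasDerivAt_of_abs_le {f f' : ℝ → ℝ} {C : ℝ}
    (hf : ∀ z, HasDerivAt f (f' z) z) (hC : ∀ z, |f' z| ≤ C) (u v : ℝ) :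
    |f u - f v| ≤ C * |u - v| := by
  simpa [Real.norm_eq_abs] using Convex.norm_image_sub_le_of_norm_hasDerivWithin_le
    (fun z _ => (hf z).hasDerivWithinAt) (fun z _ => hC z) convex_univ (Set.mem_univ v)
    (Set.mem_univ u)

lemma abs_sub_sub_deriv_le_of_abs_deriv_sub_le {φ φ' : ℝ → ℝ} {C : ℝ}
    (hφ : ∀ t, HasDerivAt φ (φ' t) t) (hC : ∀ t, 0 ≤ t → |φ' t - φ' 0| ≤ C * t) :
    |φ 1 - φ 0 - φ' 0| ≤ C / 2 := by
  have hrem : ∀ t, HasDerivAt (fun s => φ s - φ 0 - s * φ' 0) (φ' t - φ' 0) t := fun t =>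
    (((hφ t).sub_const (φ 0)).sub ((hasDerivAt_id t).mul_const (φ' 0))).congr_deriv (by simp)
  have hbound : ∀ t, HasDerivAt (fun s : ℝ => C * s ^ 2 / 2) (C * t) t := fun t =>
    (((hasDerivAt_pow 2 t).const_mul C).div_const 2).congr_deriv (by ring)
  simpa [Real.norm_eq_abs] using image_norm_le_of_norm_deriv_right_le_deriv_boundary
    (fun t _ => (hrem t).continuousAt.continuousWithinAt) (fun t _ => (hrem t).hasDerivWithinAt)
    (by simp) hbound (fun t ht => hC t ht.1) (Set.right_mem_Icc.mpr zero_le_one)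

lemma abs_sigmoid_sub_le (u v : ℝ) : |sigmoid u - sigmoid v| ≤ |u - v| / 4 := by
  have hd : ∀ z, |sigmoid z * (1 - sigmoid z)| ≤ 1 / 4 := fun z => by
    rw [abs_of_nonneg (mul_nonneg (sigmoid_nonneg z)
      (sub_nonneg.mpr (sigmoid_le_one z)))]
    nlinarith [sq_nonneg (sigmoid z - 1 / 2)]
  linarith [abs_sub_le_of_hasDerivAt_of_abs_le hasDerivAt_sigmoid hd u v]

lemma hasDerivAt_log_one_add_exp_neg_mul (y z : ℝ) :
    HasDerivAt (fun w => log (1 + exp (-y * w))) (-y * sigmoid (-(y * z))) z := by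
  have h := (((hasDerivAt_id z).const_mul (-y)).exp.const_add 1).log (by positivity)
  refine h.congr_deriv ?_
  simp only [id, mul_one, neg_mul]
  rw [← sigmoid_mul_rexp_neg, sigmoid_def]
  ring

lemma abs_inner_le_norm_of_norm_le_one {E : Type*} [NormedAddCommGroup E] [InnerProductSpace ℝ E]
    (u : E) {x : E} (hx : ‖x‖ ≤ 1) : |⟪u, x⟫| ≤ ‖u‖ :=
  (abs_real_inner_le_norm u x).trans (mul_le_of_le_one_right (norm_nonneg u) hx)

def fnetDirDeriv (d m : ℕ) (β : ℝ) (σ : ℝ → ℝ) (a : Fin m → ℝ)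
    (Θ Δ : Fin m → EuclideanSpace ℝ (Fin d)) (x : EuclideanSpace ℝ (Fin d)) : ℝ :=
  (m : ℝ) ^ (-β) * ∑ r, a r * (deriv σ ⟪Θ r, x⟫ * ⟪Δ r, x⟫)

section Network

variable {d m : ℕ} {β : ℝ} {σ : ℝ → ℝ} {a : Fin m → ℝ}
  (Θ Δ : Fin m → EuclideanSpace ℝ (Fin d)) (x : EuclideanSpace ℝ (Fin d))

lemma abs_rpow_neg_mul_sum_le (ha : ∀ r, |a r| ≤ 1) {b B : Fin m → ℝ}
    (hb : ∀ r, |b r| ≤ B r) : |(m : ℝ) ^ (-β) * ∑ r, a r * b r| ≤ (m : ℝ) ^ (-β) * ∑ r, B r := by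
  rw [abs_mul, abs_of_nonneg (by positivity)]
  gcongr
  refine (abs_sum_le_sum_abs _ _).trans (sum_le_sum fun r _ => ?_)
  rw [abs_mul]
  exact (mul_le_mul (ha r) (hb r) (abs_nonneg _) zero_le_one).trans_eq (one_mul _)

lemma hasDerivAt_fnet_line (hσ : Differentiable ℝ σ) (t : ℝ) :
    HasDerivAt (fun s : ℝ => fnet d m β σ a (Θ + s • Δ) x)
      (fnetDirDeriv d m β σ a (Θ + t • Δ) Δ x) t := by
  unfold fnet fnetDirDeriv
  refine .const_mul _ (.fun_sum fun r _ => .const_mul _ ?_)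
  have hline : HasDerivAt (fun s : ℝ => ⟪(Θ + s • Δ) r, x⟫) ⟪Δ r, x⟫ t := by
    simp only [Pi.add_apply, Pi.smul_apply, inner_add_left, real_inner_smul_left]
    simpa using ((hasDerivAt_id t).mul_const ⟪Δ r, x⟫).const_add ⟪Θ r, x⟫
  exact (hσ _).hasDerivAt.comp t hline

lemma abs_fnetDirDeriv_le {K₁ : ℝ} (hK₁ : ∀ z, |deriv σ z| ≤ K₁) (ha : ∀ r, |a r| ≤ 1)
    (hx : ‖x‖ ≤ 1) :
    |fnetDirDeriv d m β σ a Θ Δ x| ≤ (m : ℝ) ^ (-β) * ∑ r, K₁ * ‖Δ r‖ :=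
  abs_rpow_neg_mul_sum_le ha fun r => by
    rw [abs_mul]
    exact mul_le_mul (hK₁ _) (abs_inner_le_norm_of_norm_le_one _ hx) (abs_nonneg _)
      ((abs_nonneg _).trans (hK₁ 0))

lemma abs_fnetDirDeriv_sub_le {K₂ : ℝ} (hσ' : ∀ u v, |deriv σ u - deriv σ v| ≤ K₂ * |u - v|)
    (ha : ∀ r, |a r| ≤ 1) (hx : ‖x‖ ≤ 1) (Θ' : Fin m → EuclideanSpace ℝ (Fin d)) :
    |fnetDirDeriv d m β σ a Θ' Δ x - fnetDirDeriv d m β σ a Θ Δ x| ≤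
      (m : ℝ) ^ (-β) * ∑ r, K₂ * ‖Θ' r - Θ r‖ * ‖Δ r‖ := by
  have hK₂ : 0 ≤ K₂ := by simpa using (abs_nonneg _).trans (hσ' 1 0)
  rw [fnetDirDeriv, fnetDirDeriv, ← mul_sub, ← sum_sub_distrib]
  simp only [← mul_sub, ← sub_mul]
  refine abs_rpow_neg_mul_sum_le ha fun r => ?_
  rw [abs_mul]
  refine mul_le_mul ((hσ' _ _).trans ?_) (abs_inner_le_norm_of_norm_le_one _ hx) (abs_nonneg _)
    (by positivity)
  rw [← inner_sub_left]
  exact mul_le_mul_of_nonneg_left (abs_inner_le_norm_of_norm_le_one _ hx) hK₂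

lemma abs_fnet_line_sub_le {K₁ : ℝ} (hσ : Differentiable ℝ σ) (hK₁ : ∀ z, |deriv σ z| ≤ K₁)
    (ha : ∀ r, |a r| ≤ 1) (hx : ‖x‖ ≤ 1) (t : ℝ) :
    |fnet d m β σ a (Θ + t • Δ) x - fnet d m β σ a Θ x| ≤
      (m : ℝ) ^ (-β) * (∑ r, K₁ * ‖Δ r‖) * |t| := by
  simpa using abs_sub_le_of_hasDerivAt_of_abs_le (hasDerivAt_fnet_line Θ Δ x hσ)
    (fun s => abs_fnetDirDeriv_le (β := β) (Θ + s • Δ) Δ x hK₁ ha hx) t 0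

end Network

lemma abs_one_div_mul_sum_le {n : ℕ} {f : Fin n → ℝ} {B : ℝ} (hB : 0 ≤ B)
    (hf : ∀ i, |f i| ≤ B) : |(1 / n : ℝ) * ∑ i, f i| ≤ B := by
  rcases n.eq_zero_or_pos with rfl | hn
  · simpa using hB
  rw [abs_mul, abs_of_pos (by positivity), one_div_mul_eq_div, div_le_iff₀ (by positivity)]
  calc |∑ i, f i| ≤ ∑ _i : Fin n, B := (abs_sum_le_sum_abs _ _).trans (sum_le_sum fun i _ => hf i)
    _ = B * n := by simp [mul_comm]

def elossDirDeriv (d m n : ℕ) (β : ℝ) (σ : ℝ → ℝ) (a : Fin m → ℝ)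
    (x : Fin n → EuclideanSpace ℝ (Fin d)) (y : Fin n → ℝ)
    (Θ Δ : Fin m → EuclideanSpace ℝ (Fin d)) : ℝ :=
  (1 / n : ℝ) * ∑ i, gval d m n β σ a x y Θ i * fnetDirDeriv d m β σ a Θ Δ (x i)

section Loss

variable {d m n : ℕ} {β : ℝ} {σ : ℝ → ℝ} {a : Fin m → ℝ}
  {x : Fin n → EuclideanSpace ℝ (Fin d)} {y : Fin n → ℝ} (Θ Δ : Fin m → EuclideanSpace ℝ (Fin d))

lemma gval_eq_neg_mul_sigmoid (i : Fin n) :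
    gval d m n β σ a x y Θ i = -y i * sigmoid (-(y i * fnet d m β σ a Θ (x i))) := by
  rw [gval, sigmoid_def, neg_neg, div_eq_mul_inv]

lemma abs_gval_le {i : Fin n} (hy : |y i| ≤ 1) : |gval d m n β σ a x y Θ i| ≤ 1 := by
  rw [gval_eq_neg_mul_sigmoid, abs_mul, abs_neg, abs_of_nonneg (sigmoid_nonneg _)]
  exact mul_le_one₀ hy (sigmoid_nonneg _) (sigmoid_le_one _)

lemma abs_gval_sub_le {i : Fin n} (hy : |y i| ≤ 1) (Θ' : Fin m → EuclideanSpace ℝ (Fin d)) :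
    |gval d m n β σ a x y Θ' i - gval d m n β σ a x y Θ i| ≤
      |fnet d m β σ a Θ' (x i) - fnet d m β σ a Θ (x i)| / 4 := by
  set u := fnet d m β σ a Θ' (x i)
  set v := fnet d m β σ a Θ (x i)
  have hs := abs_sigmoid_sub_le (-(y i * u)) (-(y i * v))
  rw [show -(y i * u) - -(y i * v) = -(y i * (u - v)) by ring, abs_neg, abs_mul] at hs
  rw [gval_eq_neg_mul_sigmoid, gval_eq_neg_mul_sigmoid, ← mul_sub, abs_mul, abs_neg]
  nlinarith [abs_nonneg (y i), abs_nonneg (u - v),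
    abs_nonneg (sigmoid (-(y i * u)) - sigmoid (-(y i * v)))]

lemma hasDerivAt_eloss_line (hσ : Differentiable ℝ σ) (t : ℝ) :
    HasDerivAt (fun s : ℝ => eloss d m n β σ a x y (Θ + s • Δ))
      (elossDirDeriv d m n β σ a x y (Θ + t • Δ) Δ) t := by
  unfold eloss elossDirDeriv
  refine .const_mul _ (.fun_sum fun i _ => ?_)
  have h := (hasDerivAt_log_one_add_exp_neg_mul (y i) _).comp t
    (hasDerivAt_fnet_line (β := β) (a := a) Θ Δ (x i) hσ t)
  rwa [← gval_eq_neg_mul_sigmoid] at h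

lemma elossDirDeriv_eq_sum_inner_gradL :
    elossDirDeriv d m n β σ a x y Θ Δ = ∑ r, ⟪gradL d m n β σ a x y Θ r, Δ r⟫ := by
  simp only [elossDirDeriv, fnetDirDeriv, gradL, real_inner_smul_left, sum_inner, mul_sum]
  rw [sum_comm]
  refine sum_congr rfl fun r _ => sum_congr rfl fun i _ => ?_
  rw [real_inner_comm (Δ r)]
  ring

lemma abs_elossDirDeriv_line_sub_le {K₁ K₂ : ℝ} (hσ : Differentiable ℝ σ)
    (hK₁ : ∀ z, |deriv σ z| ≤ K₁) (hσ' : ∀ u v, |deriv σ u - deriv σ v| ≤ K₂ * |u - v|)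
    (ha : ∀ r, |a r| ≤ 1) (hx : ∀ i, ‖x i‖ ≤ 1) (hy : ∀ i, |y i| ≤ 1) (t : ℝ) :
    |elossDirDeriv d m n β σ a x y (Θ + t • Δ) Δ - elossDirDeriv d m n β σ a x y Θ Δ| ≤
      (((m : ℝ) ^ (-β) * ∑ r, K₁ * ‖Δ r‖) ^ 2 / 4 +
        (m : ℝ) ^ (-β) * ∑ r, K₂ * ‖Δ r‖ ^ 2) * |t| := by
  have hK₁0 : 0 ≤ K₁ := (abs_nonneg _).trans (hK₁ 0)
  have hK₂0 : 0 ≤ K₂ := by simpa using (abs_nonneg _).trans (hσ' 1 0)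
  set S := (m : ℝ) ^ (-β) * ∑ r, K₁ * ‖Δ r‖
  set C := (m : ℝ) ^ (-β) * ∑ r, K₂ * ‖Δ r‖ ^ 2
  have hC : (m : ℝ) ^ (-β) * ∑ r, K₂ * ‖(Θ + t • Δ) r - Θ r‖ * ‖Δ r‖ = C * |t| := by
    simp only [C, Pi.add_apply, Pi.smul_apply, add_sub_cancel_left, norm_smul,
      Real.norm_eq_abs, mul_sum, sum_mul]
    exact sum_congr rfl fun r _ => by ring
  rw [elossDirDeriv, elossDirDeriv, ← mul_sub, ← sum_sub_distrib]
  refine abs_one_div_mul_sum_le (by positivity) fun i => ?_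
  set g' := gval d m n β σ a x y (Θ + t • Δ) i
  set g := gval d m n β σ a x y Θ i
  set D' := fnetDirDeriv d m β σ a (Θ + t • Δ) Δ (x i)
  set D := fnetDirDeriv d m β σ a Θ Δ (x i)
  have hg : |g' - g| ≤ S * |t| / 4 :=
    (abs_gval_sub_le Θ (hy i) _).trans
      (by gcongr; exact abs_fnet_line_sub_le Θ Δ (x i) hσ hK₁ ha (hx i) t)
  have hD' : |D'| ≤ S := abs_fnetDirDeriv_le _ Δ (x i) hK₁ ha (hx i)
  have hD : |D' - D| ≤ C * |t| := (abs_fnetDirDeriv_sub_le Θ Δ (x i) hσ' ha (hx i) _).trans_eq hC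
  calc |g' * D' - g * D| = |(g' - g) * D' + g * (D' - D)| := by ring_nf
    _ ≤ |g' - g| * |D'| + |g| * |D' - D| := (abs_add_le _ _).trans_eq (by rw [abs_mul, abs_mul])
    _ ≤ S * |t| / 4 * S + 1 * (C * |t|) :=
        add_le_add (mul_le_mul hg hD' (abs_nonneg _) (by positivity))
          (mul_le_mul (abs_gval_le Θ (hy i)) hD (abs_nonneg _) zero_le_one)
    _ = (S ^ 2 / 4 + C) * |t| := by ring


lemma abs_eloss_add_sub_sub_le {K₁ K₂ : ℝ} (hσ : ContDiff ℝ 2 σ)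
    (hK₁ : ∀ z, |deriv σ z| ≤ K₁) (hK₂ : ∀ z, |deriv (deriv σ) z| ≤ K₂)
    (ha : ∀ r, |a r| ≤ 1) (hx : ∀ i, ‖x i‖ ≤ 1) (hy : ∀ i, |y i| ≤ 1) :
    |eloss d m n β σ a x y (Θ + Δ) - eloss d m n β σ a x y Θ -
        ∑ r, ⟪gradL d m n β σ a x y Θ r, Δ r⟫| ≤
      (((m : ℝ) ^ (-β) * (K₁ * ∑ r, ‖Δ r‖)) ^ 2 / 4 +
        (m : ℝ) ^ (-β) * (K₂ * ∑ r, ‖Δ r‖ ^ 2)) / 2 := by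
  have hσ₁ : Differentiable ℝ σ := hσ.differentiable (by norm_num)
  have hσ' : ∀ u v, |deriv σ u - deriv σ v| ≤ K₂ * |u - v| :=
    abs_sub_le_of_hasDerivAt_of_abs_le (fun z => (hσ.differentiable_deriv_two z).hasDerivAt) hK₂
  have h := abs_sub_sub_deriv_le_of_abs_deriv_sub_le (hasDerivAt_eloss_line Θ Δ hσ₁)
    fun t ht => by
      simpa only [zero_smul, add_zero, abs_of_nonneg ht] using
        abs_elossDirDeriv_line_sub_le (β := β) Θ Δ hσ₁ hK₁ hσ' ha hx hy t
  simpa only [zero_smul, add_zero, one_smul, ← mul_sum, elossDirDeriv_eq_sum_inner_gradL] using h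

end Loss

lemma taylor_remainder_constant_le {m β K₁ K₂ A B : ℝ} (hm : 1 ≤ m) (hβ : β ≤ 1) (hK₂ : 0 ≤ K₂)
    (hB : 0 ≤ B) (hAB : A ^ 2 ≤ m * B) :
    ((m ^ (-β) * (K₁ * A)) ^ 2 / 4 + m ^ (-β) * (K₂ * B)) / 2 ≤
      (K₁ ^ 2 + 2 * K₂ + K₁ ^ 2 * K₂ ^ 2) / (2 * m ^ (2 * β - 1)) * B := by
  have hm0 : 0 < m := by linarith
  set Q := m ^ (1 - 2 * β)
  have hQ : 0 < Q := by positivity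
  have hPQ : m ^ (-β) ≤ Q := rpow_le_rpow_of_exponent_le hm (by linarith)
  have hP2 : (m ^ (-β)) ^ 2 * m = Q := by
    rw [← rpow_natCast, ← rpow_mul hm0.le, ← rpow_add_one hm0.ne']
    norm_num [Q]
    ring_nf
  have hQinv : m ^ (2 * β - 1) = Q⁻¹ := by rw [← rpow_neg hm0.le]; ring_nf
  have hA : (m ^ (-β)) ^ 2 * K₁ ^ 2 * A ^ 2 ≤ K₁ ^ 2 * Q * B := by
    calc (m ^ (-β)) ^ 2 * K₁ ^ 2 * A ^ 2 ≤ (m ^ (-β)) ^ 2 * K₁ ^ 2 * (m * B) := by gcongr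
      _ = K₁ ^ 2 * Q * B := by rw [← hP2]; ring
  rw [hQinv]
  field_simp
  nlinarith [mul_le_mul_of_nonneg_right hPQ (by positivity : 0 ≤ K₂ * B),
    (by positivity : 0 ≤ K₁ ^ 2 * Q * B), (by positivity : 0 ≤ K₁ ^ 2 * K₂ ^ 2 * Q * B),
    (by positivity : 0 ≤ K₂ * Q * B)]

theorem gd_step_kernel_smoothing_general
    (d m n : ℕ) (hm : 0 < m)
    (σ : ℝ → ℝ) (K₁ K₂ : ℝ)
    (hσ : ContDiff ℝ 2 σ)
    (hK₁ : ∀ z, |deriv σ z| ≤ K₁)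
    (hK₂ : ∀ z, |deriv (deriv σ) z| ≤ K₂)
    (a : Fin m → ℝ) (ha : ∀ r, a r = 1 ∨ a r = -1)
    (x : Fin n → EuclideanSpace ℝ (Fin d)) (y : Fin n → ℝ)
    (hx : ∀ i, ‖x i‖ ≤ 1) (hy : ∀ i, y i = 1 ∨ y i = -1)
    (β η : ℝ) (hβ1 : β < 1)
    (Θ : Fin m → EuclideanSpace ℝ (Fin d)) :
    |eloss d m n β σ a x y
        (fun r => Θ r - η • gradL d m n β σ a x y Θ r) -
      (eloss d m n β σ a x y Θ - η * Qker d m n β σ a x y Θ)| ≤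
    η ^ 2 * (K₁ ^ 2 + 2 * K₂ + K₁ ^ 2 * K₂ ^ 2) / (2 * (m : ℝ) ^ (2 * β - 1)) *
      nsq d m (gradL d m n β σ a x y Θ) := by
  have ha' : ∀ r, |a r| ≤ 1 := fun r => by rcases ha r with h | h <;> simp [h]
  have hy' : ∀ i, |y i| ≤ 1 := fun i => by rcases hy i with h | h <;> simp [h]
  set v := gradL d m n β σ a x y Θ
  set Δ : Fin m → EuclideanSpace ℝ (Fin d) := -η • v
  have hstep : (fun r => Θ r - η • v r) = Θ + Δ := by
    ext1 r; simp [Δ, sub_eq_add_neg]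
  have hslope : ∑ r, ⟪v r, Δ r⟫ = -η * Qker d m n β σ a x y Θ := by
    simp [Δ, Qker, nsq, v, gradL, real_inner_smul_right, mul_sum]
  have hsq : ∑ r, ‖Δ r‖ ^ 2 = η ^ 2 * nsq d m v := by
    simp [Δ, norm_smul, mul_pow, nsq, mul_sum]
  have hconst := taylor_remainder_constant_le (m := (m : ℝ)) (K₁ := K₁)
    (B := ∑ r, ‖Δ r‖ ^ 2) (by exact_mod_cast hm) hβ1.le ((abs_nonneg _).trans (hK₂ 0))
    (by positivity) (by simpa using sq_sum_le_card_mul_sum_sq (s := univ) (f := fun r => ‖Δ r‖))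
  calc _ = |eloss d m n β σ a x y (Θ + Δ) - eloss d m n β σ a x y Θ - ∑ r, ⟪v r, Δ r⟫| := by
        rw [hstep, hslope]; congr 1; ring
    _ ≤ _ := (abs_eloss_add_sub_sub_le Θ Δ hσ hK₁ hK₂ ha' hx hy').trans hconst
    _ = _ := by rw [hsq]; ring

/-- Proposition 3-(i): gradient descent step behaves like a kernel-smoothed
functional gradient step. -/
theorem gd_step_kernel_smoothing
    (d m n : ℕ) (hm : 0 < m) (hn : 0 < n)
    (σ : ℝ → ℝ) (K₁ K₂ : ℝ)
    (hσ : ContDiff ℝ 2 σ)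
    (hK₁ : ∀ z, |deriv σ z| ≤ K₁)
    (hK₂ : ∀ z, |deriv (deriv σ) z| ≤ K₂)
    (a : Fin m → ℝ) (ha : ∀ r, a r = 1 ∨ a r = -1)
    (x : Fin n → EuclideanSpace ℝ (Fin d)) (y : Fin n → ℝ)
    (hx : ∀ i, ‖x i‖ ≤ 1) (hy : ∀ i, y i = 1 ∨ y i = -1)
    (β η : ℝ) (hβ0 : 0 ≤ β) (hβ1 : β < 1)
    (hη0 : 0 < η) (hη : η ≤ (m : ℝ) ^ β)
    (Θ : Fin m → EuclideanSpace ℝ (Fin d)) :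
    |eloss d m n β σ a x y
        (fun r => Θ r - η • gradL d m n β σ a x y Θ r) -
      (eloss d m n β σ a x y Θ - η * Qker d m n β σ a x y Θ)| ≤
    η ^ 2 * (K₁ ^ 2 + 2 * K₂ + K₁ ^ 2 * K₂ ^ 2) / (2 * (m : ℝ) ^ (2 * β - 1)) *
      nsq d m (gradL d m n β σ a x y Θ) :=
  gd_step_kernel_smoothing_general d m n hm σ K₁ K₂ hσ hK₁ hK₂ a ha x y hx hy β η hβ1 Θ
end
end

section
/- Let β ∈ [0,1). For all Θ = (θ_r)_{r=1}^m and Θ* = (θ_r*)_{r=1}^m in (ℝ^d)^m, L(Θ) + ∇_Θ L(Θ)ᵀ(Θ* − Θ) ≤ L(Θ*) + (K₂/m^β)·‖∇_f L(f_Θ)‖_{L1}·‖Θ* − Θ‖₂². -/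
open MeasureTheory Real Finset
open scoped RealInnerProductSpace BigOperators

noncomputable section

/-!
Write `Δ = Θ* - Θ`. The loss of a sample is the softplus `ζ ↦ log (1 + e^ζ)` at `-y f_Θ(x)`;
softplus is convex (Jensen for `log` after factoring out `1 + eᵘ`), so its tangent line at
`f_Θ(x)` bounds it below, with slope `g_Θ(x)`. The gradient term is the sample average of
`g_Θ(xᵢ)` times the derivative of `Θ ↦ f_Θ(xᵢ)` along `Δ`, and Taylor's theorem for `σ` bounds
the error of this linearization by `m^{-β} K₂ ∑ᵣ ⟪Δᵣ, xᵢ⟫² ≤ m^{-β} K₂ ‖Δ‖²`. Swapping the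
linearization for the true increment thus costs at most `|g_Θ(xᵢ)| m^{-β} K₂ ‖Δ‖²` per sample.
-/

theorem log_one_add_exp_add_le (u v : ℝ) :
    log (1 + exp u) + (v - u) / (1 + exp (-u)) ≤ log (1 + exp v) := by
  set p := 1 / (1 + exp (-u)) with hp
  have hp0 : 0 < p := by positivity
  have hp1 : p ≤ 1 := div_le_one_of_le₀ (by linarith [exp_pos (-u)]) (by positivity)
  have hsplit : 1 + exp v = (1 + exp u) * ((1 - p) • 1 + p • exp (v - u)) := by
    rw [hp, smul_eq_mul, smul_eq_mul, exp_sub, exp_neg]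
    field_simp
    ring
  have hmix : 0 < (1 - p) • (1 : ℝ) + p • exp (v - u) :=
    add_pos_of_nonneg_of_pos (by simpa using hp1) (mul_pos hp0 (exp_pos _))
  have hjensen : (1 - p) • log 1 + p • log (exp (v - u)) ≤ log ((1 - p) • 1 + p • exp (v - u)) :=
    strictConcaveOn_log_Ioi.concaveOn.2 (Set.mem_Ioi.2 one_pos) (Set.mem_Ioi.2 (exp_pos _))
      (by linarith) hp0.le (by ring)
  rw [log_one, log_exp, smul_zero, zero_add, smul_eq_mul] at hjensen
  rw [hsplit, log_mul (by positivity) hmix.ne', div_eq_mul_one_div _ (1 + exp (-u)), ← hp,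
    mul_comm]
  linarith

theorem log_one_add_exp_neg_mul_add_le (y F F' : ℝ) :
    log (1 + exp (-y * F)) + -y / (1 + exp (y * F)) * (F' - F) ≤ log (1 + exp (-y * F')) := by
  have h := log_one_add_exp_add_le (-y * F) (-y * F')
  rw [neg_mul, neg_neg, ← neg_mul] at h
  convert h using 2
  ring

theorem log_one_add_exp_neg_mul_add_le_of_abs_sub_le {y F F' s e : ℝ} (h : |F' - F - s| ≤ e) :
    log (1 + exp (-y * F)) + -y / (1 + exp (y * F)) * s ≤
      log (1 + exp (-y * F')) + |-y / (1 + exp (y * F))| * e := by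
  set g := -y / (1 + exp (y * F))
  have herr : -(g * (F' - F - s)) ≤ |g| * e :=
    calc -(g * (F' - F - s)) ≤ |g| * |F' - F - s| := (neg_le_abs _).trans (abs_mul _ _).le
      _ ≤ |g| * e := mul_le_mul_of_nonneg_left h (abs_nonneg g)
  have hsplit : g * s = g * (F' - F) + -(g * (F' - F - s)) := by ring
  linarith [log_one_add_exp_neg_mul_add_le y F F']

theorem abs_sub_sub_deriv_mul_le_sq {f : ℝ → ℝ} {K : ℝ} (hf : Differentiable ℝ f)
    (hf' : Differentiable ℝ (deriv f)) (hK : ∀ z, |deriv (deriv f) z| ≤ K) (a b : ℝ) :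
    |f b - f a - deriv f a * (b - a)| ≤ K * (b - a) ^ 2 := by
  have hlip : ∀ t, |deriv f t - deriv f a| ≤ K * |t - a| := fun t =>
    convex_univ.norm_image_sub_le_of_norm_deriv_le (fun z _ => hf' z) (fun z _ => hK z)
      (Set.mem_univ a) (Set.mem_univ t)
  have hg : ∀ t, HasDerivAt (fun t => f t - deriv f a * t) (deriv f t - deriv f a) t := fun t =>
    ((hf t).hasDerivAt.sub ((hasDerivAt_id' t).const_mul (deriv f a))).congr_deriv (by ring)
  have hmvt := (convex_uIcc a b).norm_image_sub_le_of_norm_deriv_le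
    (f := fun t => f t - deriv f a * t) (C := K * |b - a|) (fun t _ => (hg t).differentiableAt)
    (fun t ht => by
      rw [(hg t).deriv]
      exact (hlip t).trans (mul_le_mul_of_nonneg_left (Set.abs_sub_left_of_mem_uIcc ht)
        ((abs_nonneg _).trans (hK 0))))
    Set.left_mem_uIcc Set.right_mem_uIcc
  rw [Real.norm_eq_abs, Real.norm_eq_abs, mul_assoc, abs_mul_abs_self, ← sq] at hmvt
  convert hmvt using 2
  ring

def fnetDeriv (d m : ℕ) (β : ℝ) (σ : ℝ → ℝ) (a : Fin m → ℝ)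
    (Θ Δ : Fin m → EuclideanSpace ℝ (Fin d)) (x : EuclideanSpace ℝ (Fin d)) : ℝ :=
  (m : ℝ) ^ (-β) * ∑ r, a r * deriv σ ⟪Θ r, x⟫ * ⟪Δ r, x⟫

theorem sum_inner_gradL (d m n : ℕ) (β : ℝ) (σ : ℝ → ℝ) (a : Fin m → ℝ)
    (x : Fin n → EuclideanSpace ℝ (Fin d)) (y : Fin n → ℝ)
    (Θ Δ : Fin m → EuclideanSpace ℝ (Fin d)) :
    ∑ r, ⟪gradL d m n β σ a x y Θ r, Δ r⟫ =
      (1 / n : ℝ) * ∑ i, gval d m n β σ a x y Θ i * fnetDeriv d m β σ a Θ Δ (x i) := by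
  simp only [gradL, fnetDeriv, real_inner_smul_left, sum_inner, mul_sum]
  rw [sum_comm]
  refine sum_congr rfl fun i _ => sum_congr rfl fun r _ => ?_
  rw [real_inner_comm (Δ r) (x i)]
  ring

theorem abs_fnet_sub_sub_fnetDeriv_le {d m : ℕ} {β : ℝ} {σ : ℝ → ℝ} {K : ℝ} {a : Fin m → ℝ}
    (hσ : Differentiable ℝ σ) (hσ' : Differentiable ℝ (deriv σ))
    (hK : ∀ z, |deriv (deriv σ) z| ≤ K) (ha : ∀ r, |a r| ≤ 1)
    {x : EuclideanSpace ℝ (Fin d)} (hx : ‖x‖ ≤ 1) (Θ Θ' : Fin m → EuclideanSpace ℝ (Fin d)) :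
    |fnet d m β σ a Θ' x - fnet d m β σ a Θ x
        - fnetDeriv d m β σ a Θ (fun r => Θ' r - Θ r) x| ≤
      (m : ℝ) ^ (-β) * (K * nsq d m (fun r => Θ' r - Θ r)) := by
  have hK0 : 0 ≤ K := (abs_nonneg _).trans (hK 0)
  have hterm : ∀ r, |a r * (σ ⟪Θ' r, x⟫ - σ ⟪Θ r, x⟫ - deriv σ ⟪Θ r, x⟫ * ⟪Θ' r - Θ r, x⟫)| ≤
      K * ‖Θ' r - Θ r‖ ^ 2 := fun r => by
    have hinner : |⟪Θ' r - Θ r, x⟫| ≤ ‖Θ' r - Θ r‖ :=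
      (abs_real_inner_le_norm _ _).trans (mul_le_of_le_one_right (norm_nonneg _) hx)
    have htaylor := abs_sub_sub_deriv_mul_le_sq hσ hσ' hK ⟪Θ r, x⟫ ⟪Θ' r, x⟫
    rw [← inner_sub_left] at htaylor
    rw [abs_mul]
    calc |a r| * |σ ⟪Θ' r, x⟫ - σ ⟪Θ r, x⟫ - deriv σ ⟪Θ r, x⟫ * ⟪Θ' r - Θ r, x⟫|
        ≤ 1 * (K * ⟪Θ' r - Θ r, x⟫ ^ 2) := mul_le_mul (ha r) htaylor (abs_nonneg _) zero_le_one
      _ ≤ K * ‖Θ' r - Θ r‖ ^ 2 := by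
        rw [one_mul, ← sq_abs]
        gcongr
  have hsum : fnet d m β σ a Θ' x - fnet d m β σ a Θ x
        - fnetDeriv d m β σ a Θ (fun r => Θ' r - Θ r) x =
      (m : ℝ) ^ (-β) * ∑ r, a r *
        (σ ⟪Θ' r, x⟫ - σ ⟪Θ r, x⟫ - deriv σ ⟪Θ r, x⟫ * ⟪Θ' r - Θ r, x⟫) := by
    simp only [fnet, fnetDeriv, ← mul_sub, ← sum_sub_distrib]
    congr 1
    refine sum_congr rfl fun r _ => ?_
    ring
  rw [hsum, abs_mul, abs_of_nonneg (rpow_nonneg (Nat.cast_nonneg m) _), nsq, mul_sum]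
  gcongr
  exact (abs_sum_le_sum_abs _ _).trans (sum_le_sum fun r _ => hterm r)

theorem almost_convexity_general
    (d m n : ℕ)
    (σ : ℝ → ℝ) (K₂ : ℝ)
    (hσ : ContDiff ℝ 2 σ)
    (hK₂ : ∀ z, |deriv (deriv σ) z| ≤ K₂)
    (a : Fin m → ℝ) (ha : ∀ r, a r = 1 ∨ a r = -1)
    (x : Fin n → EuclideanSpace ℝ (Fin d)) (y : Fin n → ℝ)
    (hx : ∀ i, ‖x i‖ ≤ 1)
    (β : ℝ)
    (Θ Θs : Fin m → EuclideanSpace ℝ (Fin d)) :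
    eloss d m n β σ a x y Θ +
        ∑ r, ⟪gradL d m n β σ a x y Θ r, Θs r - Θ r⟫ ≤
      eloss d m n β σ a x y Θs +
        K₂ / (m : ℝ) ^ β * L1norm d m n β σ a x y Θ *
          nsq d m (fun r => Θs r - Θ r) := by
  have hσ' : Differentiable ℝ (deriv σ) :=
    (contDiff_succ_iff_deriv.mp (show ContDiff ℝ (1 + 1) σ from hσ)).2.2.differentiable
      one_ne_zero
  have ha' : ∀ r, |a r| ≤ 1 := fun r => by rcases ha r with h | h <;> simp [h]
  have hsample : ∀ i, log (1 + exp (-y i * fnet d m β σ a Θ (x i))) +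
        gval d m n β σ a x y Θ i * fnetDeriv d m β σ a Θ (fun r => Θs r - Θ r) (x i) ≤
      log (1 + exp (-y i * fnet d m β σ a Θs (x i))) + |gval d m n β σ a x y Θ i| *
        ((m : ℝ) ^ (-β) * (K₂ * nsq d m (fun r => Θs r - Θ r))) := fun i =>
    log_one_add_exp_neg_mul_add_le_of_abs_sub_le
      (abs_fnet_sub_sub_fnetDeriv_le (hσ.differentiable two_ne_zero) hσ' hK₂ ha' (hx i) Θ Θs)
  rw [sum_inner_gradL]
  calc _ = (1 / n : ℝ) * ∑ i, (log (1 + exp (-y i * fnet d m β σ a Θ (x i))) +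
        gval d m n β σ a x y Θ i * fnetDeriv d m β σ a Θ (fun r => Θs r - Θ r) (x i)) := by
        rw [eloss, sum_add_distrib, mul_add]
    _ ≤ (1 / n : ℝ) * ∑ i, (log (1 + exp (-y i * fnet d m β σ a Θs (x i))) +
        |gval d m n β σ a x y Θ i| *
          ((m : ℝ) ^ (-β) * (K₂ * nsq d m (fun r => Θs r - Θ r)))) :=
        mul_le_mul_of_nonneg_left (sum_le_sum fun i _ => hsample i) (by positivity)
    _ = _ := by
        rw [sum_add_distrib, mul_add, ← sum_mul, rpow_neg (Nat.cast_nonneg m), eloss, L1norm]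
        ring

/-- Proposition 3-(ii): almost convexity of the loss landscape. -/
theorem almost_convexity
    (d m n : ℕ) (hm : 0 < m) (hn : 0 < n)
    (σ : ℝ → ℝ) (K₁ K₂ : ℝ)
    (hσ : ContDiff ℝ 2 σ)
    (hK₁ : ∀ z, |deriv σ z| ≤ K₁)
    (hK₂ : ∀ z, |deriv (deriv σ) z| ≤ K₂)
    (a : Fin m → ℝ) (ha : ∀ r, a r = 1 ∨ a r = -1)
    (x : Fin n → EuclideanSpace ℝ (Fin d)) (y : Fin n → ℝ)
    (hx : ∀ i, ‖x i‖ ≤ 1) (hy : ∀ i, y i = 1 ∨ y i = -1)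
    (β : ℝ) (hβ0 : 0 ≤ β) (hβ1 : β < 1)
    (Θ Θs : Fin m → EuclideanSpace ℝ (Fin d)) :
    eloss d m n β σ a x y Θ +
        ∑ r, ⟪gradL d m n β σ a x y Θ r, Θs r - Θ r⟫ ≤
      eloss d m n β σ a x y Θs +
        K₂ / (m : ℝ) ^ β * L1norm d m n β σ a x y Θ *
          nsq d m (fun r => Θs r - Θ r) :=
  almost_convexity_general d m n σ K₂ hσ hK₂ a ha x y hx β Θ Θs
end
end

section
/- For every δ ∈ (0,1) and every even m ∈ ℤ₊ with m ≥ (16K₁²/ρ²)·log(2n/δ), the following holds with probability at least 1 − δ over the i.i.d. draw of (θ_r^{(0)})_{r=1}^{m/2} from μ₀^{⊗(m/2)} (with the symmetric initialization Θ^{(0)}): for every Θ ∈ (ℝ^d)^m with ‖Θ − Θ^{(0)}‖_{2,1} ≤ mρ/(4K₂), one has Q(Θ) = ‖(1/n) Σ_{i=1}^n g_Θ(x_i)·∇_Θ f_Θ(x_i)‖₂² ≥ (ρ²/(16 m^{2β−1}))·‖∇_f L(f_Θ)‖_{L1}². -/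
open MeasureTheory Real Finset
open scoped RealInnerProductSpace BigOperators

noncomputable section

/-!
At the symmetric initialization the margin of the separating direction `v`,
`y_i ∑_r σ'(θ_rᵀx_i) x_iᵀ v(θ_r)`, is twice a sum of `m/2` i.i.d. variables bounded by `K₁`
with mean at least `ρ`. Hoeffding's inequality and a union bound over the `n` samples make this
margin at least `mρ/2` for every `i` with probability `1 - δ`. Moving `Θ` by
`‖Θ - Θ⁽⁰⁾‖_{2,1} ≤ mρ/(4K₂)` changes it by at most `mρ/4`, since `σ'` is `K₂`-Lipschitz.
Pairing the gradient `∇_Θ` of the loss with the direction `(a_r v(θ_r⁽⁰⁾))_r` then gives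
`-⟪∇, a v⟫ ≥ m^{-β} (mρ/4) ‖∇_f L‖_{L¹}`, because `-g_Θ(x_i) = y_i |g_Θ(x_i)|`, and
Cauchy–Schwarz, `⟪∇, a v⟫² ≤ m Q(Θ)`, concludes.
-/

open ProbabilityTheory
open scoped NNReal

section Hoeffding

variable {α : Type*} [MeasurableSpace α] (μ : Measure α) [IsProbabilityMeasure μ]

theorem measureReal_pi_sum_le_sub_le {h : α → ℝ} (hh : Measurable h) {c : ℝ}
    (hc : ∀ θ, |h θ| ≤ c) (k : ℕ) {ε : ℝ} (hε : 0 ≤ ε) :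
    (Measure.pi fun _ : Fin k => μ).real {ω | ∑ j, h (ω j) ≤ k * ∫ θ, h θ ∂μ - ε} ≤
      exp (-ε ^ 2 / (2 * k * c ^ 2)) := by
  set X : α → ℝ := fun θ => -h θ - μ[fun θ => -h θ]
  have hX : HasSubgaussianMGF X ((‖c - -c‖₊ / 2) ^ 2) μ :=
    hasSubgaussianMGF_of_mem_Icc hh.neg.aemeasurable
      (ae_of_all _ fun θ => by have := abs_le.mp (hc θ); constructor <;> linarith)
  have hX_eval (j : Fin k) : HasSubgaussianMGF (fun ω : Fin k → α => X (ω j))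
      ((‖c - -c‖₊ / 2) ^ 2) (Measure.pi fun _ => μ) := by
    rw [← (measurePreserving_eval (fun _ : Fin k => μ) j).map_eq] at hX
    exact HasSubgaussianMGF.of_map (Y := fun ω : Fin k → α => ω j)
      (measurable_pi_apply j).aemeasurable hX
  have hsum := HasSubgaussianMGF.measure_sum_ge_le_of_iIndepFun (s := Finset.univ)
    (iIndepFun_pi (X := fun _ => X) fun _ => (hh.neg.sub_const _).aemeasurable)
    (fun j _ => hX_eval j) hε
  have hparam : ((∑ _j : Fin k, (‖c - -c‖₊ / 2) ^ 2 : ℝ≥0) : ℝ) = k * c ^ 2 := by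
    simp [← two_mul]
  rw [hparam, ← mul_assoc] at hsum
  convert hsum using 3
  ext ω
  simp only [X, integral_neg, sub_neg_eq_add, Finset.sum_add_distrib, Finset.sum_neg_distrib,
    Finset.sum_const, Finset.card_univ, Fintype.card_fin, nsmul_eq_mul]
  constructor <;> intro <;> linarith

theorem ofReal_one_sub_le_of_measure_compl_le {s : Set α} {δ : ℝ} (hδ : 0 ≤ δ)
    (h : μ sᶜ ≤ ENNReal.ofReal δ) : ENNReal.ofReal (1 - δ) ≤ μ s := by
  rw [ENNReal.ofReal_sub _ hδ, ENNReal.ofReal_one, tsub_le_iff_right, ← measure_univ (μ := μ)]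
  exact (measure_univ_le_add_compl s).trans (by gcongr)

theorem ofReal_one_sub_le_pi_forall_sum_ge {ι : Type*} [Fintype ι] {H : ι → α → ℝ}
    (hH : ∀ i, Measurable (H i)) {c ρ δ : ℝ} (hc : ∀ i θ, |H i θ| ≤ c) (hρ : 0 < ρ)
    (hmean : ∀ i, ρ ≤ ∫ θ, H i θ ∂μ) (hδ : 0 < δ) {k : ℕ} (hk : 0 < k)
    (hkc : 8 * c ^ 2 / ρ ^ 2 * log (Fintype.card ι / δ) ≤ k) :
    ENNReal.ofReal (1 - δ) ≤
      (Measure.pi fun _ : Fin k => μ) {ω | ∀ i, k * ρ / 2 ≤ ∑ j, H i (ω j)} := by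
  set N : ℝ := (Fintype.card ι : ℝ)
  have hbad (i : ι) : (Measure.pi fun _ : Fin k => μ) {ω | ∑ j, H i (ω j) < k * ρ / 2} ≤
      ENNReal.ofReal (δ / N) := by
    have hN : 0 < N := Nat.cast_pos.mpr (Fintype.card_pos_iff.mpr ⟨i⟩)
    have hc0 : 0 < c := by
      have := norm_integral_le_of_norm_le_const (μ := μ)
        (ae_of_all _ fun θ => (Real.norm_eq_abs _).trans_le (hc i θ))
      rw [probReal_univ, mul_one, Real.norm_eq_abs] at this
      linarith [hmean i, le_abs_self (∫ θ, H i θ ∂μ)]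
    have hlog : log (N / δ) ≤ (k * ρ / 2) ^ 2 / (2 * k * c ^ 2) := by
      rw [show (k * ρ / 2) ^ 2 / (2 * k * c ^ 2) = k / (8 * c ^ 2 / ρ ^ 2) by
        field_simp; ring]
      exact (le_div_iff₀ (by positivity)).mpr (by linarith)
    calc _ ≤ (Measure.pi fun _ : Fin k => μ)
          {ω | ∑ j, H i (ω j) ≤ k * ∫ θ, H i θ ∂μ - k * ρ / 2} := by
          refine measure_mono (Set.ofPred_subset_ofPred.mpr fun ω hω => ?_)
          nlinarith [hmean i]
      _ = ENNReal.ofReal ((Measure.pi fun _ : Fin k => μ).real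
          {ω | ∑ j, H i (ω j) ≤ k * ∫ θ, H i θ ∂μ - k * ρ / 2}) := (ofReal_measureReal).symm
      _ ≤ ENNReal.ofReal (exp (-(k * ρ / 2) ^ 2 / (2 * k * c ^ 2))) :=
          ENNReal.ofReal_le_ofReal
            (measureReal_pi_sum_le_sub_le μ (hH i) (hc i) k (by positivity))
      _ ≤ ENNReal.ofReal (exp (-log (N / δ))) :=
          ENNReal.ofReal_le_ofReal (exp_le_exp.mpr (by rw [neg_div]; linarith))
      _ = ENNReal.ofReal (δ / N) := by rw [exp_neg, exp_log (by positivity), inv_div]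
  refine ofReal_one_sub_le_of_measure_compl_le _ hδ.le ?_
  have hcompl : {ω : Fin k → α | ∀ i, k * ρ / 2 ≤ ∑ j, H i (ω j)}ᶜ =
      ⋃ i, {ω | ∑ j, H i (ω j) < k * ρ / 2} := by
    ext ω
    simp
  calc _ = (Measure.pi fun _ : Fin k => μ) (⋃ i, {ω | ∑ j, H i (ω j) < k * ρ / 2}) := by
        rw [hcompl]
    _ ≤ ∑ i, (Measure.pi fun _ : Fin k => μ) {ω | ∑ j, H i (ω j) < k * ρ / 2} :=
        measure_iUnion_fintype_le _ _
    _ ≤ ∑ _i : ι, ENNReal.ofReal (δ / N) := Finset.sum_le_sum fun i _ => hbad i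
    _ = ENNReal.ofReal (N * (δ / N)) := by
        rw [Finset.sum_const, Finset.card_univ, nsmul_eq_mul, ENNReal.ofReal_mul (by positivity),
          ENNReal.ofReal_natCast]
    _ ≤ ENNReal.ofReal δ := by
        refine ENNReal.ofReal_le_ofReal ?_
        rcases (show (0 : ℝ) ≤ N by positivity).eq_or_lt with hN | hN
        · rw [← hN, zero_mul]; exact hδ.le
        · rw [mul_div_cancel₀ _ hN.ne']

end Hoeffding

section InnerProductSpace

variable {E : Type*} [NormedAddCommGroup E] [InnerProductSpace ℝ E] {ι : Type*} [Fintype ι]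

theorem sq_sum_inner_le_card_mul_sum_norm_sq (G w : ι → E) (hw : ∀ r, ‖w r‖ ≤ 1) :
    (∑ r, ⟪G r, w r⟫) ^ 2 ≤ Fintype.card ι * ∑ r, ‖G r‖ ^ 2 := by
  have hle : |∑ r, ⟪G r, w r⟫| ≤ ∑ r, ‖G r‖ :=
    (Finset.abs_sum_le_sum_abs _ _).trans <| Finset.sum_le_sum fun r _ =>
      (abs_real_inner_le_norm _ _).trans (mul_le_of_le_one_right (norm_nonneg _) (hw r))
  calc (∑ r, ⟪G r, w r⟫) ^ 2 = |∑ r, ⟪G r, w r⟫| ^ 2 := (sq_abs _).symm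
    _ ≤ (∑ r, ‖G r‖) ^ 2 := pow_le_pow_left₀ (abs_nonneg _) hle 2
    _ ≤ Fintype.card ι * ∑ r, ‖G r‖ ^ 2 := by
        simpa using sq_sum_le_card_mul_sum_sq (s := Finset.univ) (f := fun r => ‖G r‖)

theorem abs_sum_comp_inner_sub_le {f : ℝ → ℝ} {L : ℝ} (hf : ∀ p q, |f p - f q| ≤ L * |p - q|)
    {z : E} (hz : ‖z‖ ≤ 1) (w Θ Θ₀ : ι → E) (hw : ∀ r, ‖w r‖ ≤ 1) :
    |∑ r, f ⟪Θ r, z⟫ * ⟪z, w r⟫ - ∑ r, f ⟪Θ₀ r, z⟫ * ⟪z, w r⟫| ≤ L * ∑ r, ‖Θ r - Θ₀ r‖ := by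
  have hL : 0 ≤ L := by simpa using (abs_nonneg _).trans (hf 1 0)
  rw [← Finset.sum_sub_distrib, Finset.mul_sum]
  refine (Finset.abs_sum_le_sum_abs _ _).trans (Finset.sum_le_sum fun r _ => ?_)
  have hzw : |⟪z, w r⟫| ≤ 1 :=
    (abs_real_inner_le_norm _ _).trans (mul_le_one₀ hz (norm_nonneg _) (hw r))
  have hdiff : |f ⟪Θ r, z⟫ - f ⟪Θ₀ r, z⟫| ≤ L * ‖Θ r - Θ₀ r‖ := by
    refine (hf _ _).trans (mul_le_mul_of_nonneg_left ?_ hL)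
    rw [← inner_sub_left]
    exact (abs_real_inner_le_norm _ _).trans (mul_le_of_le_one_right (norm_nonneg _) hz)
  rw [← sub_mul, abs_mul]
  exact (mul_le_mul hdiff hzw (abs_nonneg _) (by positivity)).trans_eq (mul_one _)

end InnerProductSpace

theorem abs_sub_le_of_abs_deriv_le {f : ℝ → ℝ} (hf : Differentiable ℝ f) {L : ℝ}
    (hL : ∀ z, |deriv f z| ≤ L) (p q : ℝ) : |f p - f q| ≤ L * |p - q| := by
  simpa [Real.norm_eq_abs] using Convex.norm_image_sub_le_of_norm_deriv_le
    (fun z _ => hf z) (fun z _ => (Real.norm_eq_abs _).trans_le (hL z)) convex_univ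
    (Set.mem_univ q) (Set.mem_univ p)

section Network

variable {d m n : ℕ} {β : ℝ} {σ : ℝ → ℝ} {a : Fin m → ℝ} {x : Fin n → EuclideanSpace ℝ (Fin d)}
  {y : Fin n → ℝ}

theorem neg_gval_eq_mul_abs (Θ : Fin m → EuclideanSpace ℝ (Fin d)) {i : Fin n}
    (hy : |y i| = 1) : -gval d m n β σ a x y Θ i = y i * |gval d m n β σ a x y Θ i| := by
  have hD : 0 < 1 + exp (y i * fnet d m β σ a Θ (x i)) := by positivity
  rw [gval, abs_div, abs_neg, hy, abs_of_pos hD]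
  ring

theorem sum_inner_gradL_smul (Θ : Fin m → EuclideanSpace ℝ (Fin d)) (ha : ∀ r, a r * a r = 1)
    (w : Fin m → EuclideanSpace ℝ (Fin d)) :
    ∑ r, ⟪gradL d m n β σ a x y Θ r, a r • w r⟫ = (1 / n) * (m : ℝ) ^ (-β) *
      ∑ i, gval d m n β σ a x y Θ i * ∑ r, deriv σ ⟪Θ r, x i⟫ * ⟪x i, w r⟫ := by
  simp only [gradL, inner_smul_left, inner_smul_right, sum_inner, Finset.mul_sum]
  rw [Finset.sum_comm]
  refine Finset.sum_congr rfl fun i _ => Finset.sum_congr rfl fun r _ => ?_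
  simp only [conj_trivial]
  linear_combination (1 / n * (m : ℝ) ^ (-β) * gval d m n β σ a x y Θ i *
    deriv σ ⟪Θ r, x i⟫ * ⟪x i, w r⟫) * ha r

theorem Qker_eq_sum_norm_gradL_sq (Θ : Fin m → EuclideanSpace ℝ (Fin d)) :
    Qker d m n β σ a x y Θ = ∑ r, ‖gradL d m n β σ a x y Θ r‖ ^ 2 :=
  rfl

theorem sq_mul_L1norm_le_mul_Qker (Θ w : Fin m → EuclideanSpace ℝ (Fin d))
    (ha : ∀ r, |a r| = 1) (hw : ∀ r, ‖w r‖ ≤ 1) (hy : ∀ i, |y i| = 1) {γ : ℝ} (hγ : 0 ≤ γ)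
    (hmargin : ∀ i, γ ≤ y i * ∑ r, deriv σ ⟪Θ r, x i⟫ * ⟪x i, w r⟫) :
    ((m : ℝ) ^ (-β) * γ * L1norm d m n β σ a x y Θ) ^ 2 ≤ m * Qker d m n β σ a x y Θ := by
  have hs := sum_inner_gradL_smul (x := x) (y := y) (β := β) (σ := σ) Θ
    (fun r => by rw [← abs_mul_abs_self, ha r, one_mul]) w
  have hlow : (m : ℝ) ^ (-β) * γ * L1norm d m n β σ a x y Θ ≤
      -∑ r, ⟪gradL d m n β σ a x y Θ r, a r • w r⟫ := by
    rw [hs, L1norm]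
    calc _ = 1 / n * (m : ℝ) ^ (-β) * ∑ i, |gval d m n β σ a x y Θ i| * γ := by
          rw [← Finset.sum_mul]; ring
      _ ≤ 1 / n * (m : ℝ) ^ (-β) * ∑ i, -gval d m n β σ a x y Θ i *
            ∑ r, deriv σ ⟪Θ r, x i⟫ * ⟪x i, w r⟫ := by
          refine mul_le_mul_of_nonneg_left (Finset.sum_le_sum fun i _ => ?_) (by positivity)
          rw [neg_gval_eq_mul_abs Θ (hy i), mul_comm (y i), mul_assoc]
          exact mul_le_mul_of_nonneg_left (hmargin i) (abs_nonneg _)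
      _ = _ := by simp only [neg_mul, Finset.sum_neg_distrib]; ring
  have hcs := sq_sum_inner_le_card_mul_sum_norm_sq (gradL d m n β σ a x y Θ)
    (fun r => a r • w r) fun r => by rw [norm_smul, Real.norm_eq_abs, ha r, one_mul]; exact hw r
  calc _ ≤ (-∑ r, ⟪gradL d m n β σ a x y Θ r, a r • w r⟫) ^ 2 :=
        pow_le_pow_left₀ (by unfold L1norm; positivity) hlow 2
    _ ≤ m * Qker d m n β σ a x y Θ := by
        rw [neg_sq, Qker_eq_sum_norm_gradL_sq]
        simpa only [Fintype.card_fin] using hcs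

end Network

section SymmetricInit

variable {d k : ℕ}

theorem abs_symSigns (r : Fin (2 * k)) : |symSigns k r| = 1 := by
  unfold symSigns
  split_ifs <;> norm_num

theorem sum_symInit (ω : Fin k → EuclideanSpace ℝ (Fin d))
    (F : EuclideanSpace ℝ (Fin d) → ℝ) :
    ∑ r : Fin (2 * k), F (symInit d k ω r) = 2 * ∑ j, F (ω j) := by
  have hk : k + k = 2 * k := by ring
  rw [← (finCongr hk).sum_comp, Fin.sum_univ_add]
  have hleft (j : Fin k) : symInit d k ω (finCongr hk (Fin.castAdd k j)) = ω j := by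
    simp [symInit]
  have hright (j : Fin k) : symInit d k ω (finCongr hk (Fin.natAdd k j)) = ω j := by
    simp only [symInit, finCongr_apply, Fin.val_cast, Fin.val_natAdd]
    rw [dif_neg (by omega)]
    congr 1
    ext
    simp
  simp only [hleft, hright]
  ring

theorem sub_le_mul_sum_of_near_symInit {f : ℝ → ℝ} {L : ℝ}
    (hf : ∀ p q, |f p - f q| ≤ L * |p - q|) {z : EuclideanSpace ℝ (Fin d)} (hz : ‖z‖ ≤ 1)
    {w : EuclideanSpace ℝ (Fin d) → EuclideanSpace ℝ (Fin d)} (hw : ∀ θ, ‖w θ‖ ≤ 1)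
    {t : ℝ} (ht : |t| = 1) (ω : Fin k → EuclideanSpace ℝ (Fin d))
    (Θ : Fin (2 * k) → EuclideanSpace ℝ (Fin d)) :
    2 * ∑ j, t * (f ⟪ω j, z⟫ * ⟪z, w (ω j)⟫) - L * n21 d (2 * k) (fun r => Θ r - symInit d k ω r)
      ≤ t * ∑ r, f ⟪Θ r, z⟫ * ⟪z, w (symInit d k ω r)⟫ := by
  have hinit : t * ∑ r, f ⟪symInit d k ω r, z⟫ * ⟪z, w (symInit d k ω r)⟫ =
      2 * ∑ j, t * (f ⟪ω j, z⟫ * ⟪z, w (ω j)⟫) := by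
    rw [Finset.mul_sum, sum_symInit ω fun θ => t * (f ⟪θ, z⟫ * ⟪z, w θ⟫)]
  have hnear := abs_sum_comp_inner_sub_le hf hz (fun r => w (symInit d k ω r)) Θ
    (symInit d k ω) fun r => hw _
  rw [← one_mul |_ - _|, ← ht, ← abs_mul, mul_sub] at hnear
  unfold n21
  linarith [neg_abs_le (t * ∑ r, f ⟪Θ r, z⟫ * ⟪z, w (symInit d k ω r)⟫ -
    t * ∑ r, f ⟪symInit d k ω r, z⟫ * ⟪z, w (symInit d k ω r)⟫)]

end SymmetricInit

theorem ofReal_one_sub_le_pi_forall_margin_ge {d n : ℕ} {σ : ℝ → ℝ} {K₁ : ℝ}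
    (hK₁ : ∀ z, |deriv σ z| ≤ K₁) {x : Fin n → EuclideanSpace ℝ (Fin d)} (hx : ∀ i, ‖x i‖ ≤ 1)
    {y : Fin n → ℝ} (hy : ∀ i, |y i| = 1) {μ₀ : Measure (EuclideanSpace ℝ (Fin d))}
    [IsProbabilityMeasure μ₀] {v : EuclideanSpace ℝ (Fin d) → EuclideanSpace ℝ (Fin d)}
    (hv_meas : Measurable v) (hv_norm : ∀ θ, ‖v θ‖ ≤ 1) {ρ δ : ℝ}
    (hsep : ∀ i, ρ ≤ y i * ∫ θ, deriv σ ⟪θ, x i⟫ * ⟪x i, v θ⟫ ∂μ₀) (hρ : 0 < ρ) (hδ : 0 < δ)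
    {k : ℕ} (hk : 0 < k) (hkc : 8 * K₁ ^ 2 / ρ ^ 2 * log (n / δ) ≤ k) :
    ENNReal.ofReal (1 - δ) ≤ (Measure.pi fun _ : Fin k => μ₀)
      {ω | ∀ i, k * ρ / 2 ≤ ∑ j, y i * (deriv σ ⟪ω j, x i⟫ * ⟪x i, v (ω j)⟫)} := by
  have hxv (i : Fin n) (θ) : |⟪x i, v θ⟫| ≤ 1 :=
    (abs_real_inner_le_norm _ _).trans (mul_le_one₀ (hx i) (norm_nonneg _) (hv_norm θ))
  refine ofReal_one_sub_le_pi_forall_sum_ge μ₀ (c := K₁)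
    (H := fun i θ => y i * (deriv σ ⟪θ, x i⟫ * ⟪x i, v θ⟫))
    (fun i => measurable_const.mul (((measurable_deriv σ).comp
      (measurable_id.inner measurable_const)).mul (measurable_const.inner hv_meas)))
    (fun i θ => ?_) hρ (fun i => by rw [integral_const_mul]; exact hsep i) hδ hk
    (by rwa [Fintype.card_fin])
  rw [abs_mul, abs_mul, hy, one_mul]
  exact (mul_le_mul (hK₁ _) (hxv i θ) (abs_nonneg _) ((abs_nonneg _).trans (hK₁ 0))).trans_eq
    (mul_one _)

theorem kernel_positivity_general
    (d n k : ℕ) (hk : 0 < k)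
    (σ : ℝ → ℝ) (K₁ K₂ : ℝ)
    (hσ : ContDiff ℝ 2 σ)
    (hK₁ : ∀ z, |deriv σ z| ≤ K₁)
    (hK₂ : ∀ z, |deriv (deriv σ) z| ≤ K₂)
    (x : Fin n → EuclideanSpace ℝ (Fin d)) (y : Fin n → ℝ)
    (hx : ∀ i, ‖x i‖ ≤ 1) (hy : ∀ i, y i = 1 ∨ y i = -1)
    (μ₀ : Measure (EuclideanSpace ℝ (Fin d))) [IsProbabilityMeasure μ₀]
    (ρ : ℝ) (hρ : 0 < ρ)
    (v : EuclideanSpace ℝ (Fin d) → EuclideanSpace ℝ (Fin d))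
    (hv_meas : Measurable v) (hv_norm : ∀ θ, ‖v θ‖ ≤ 1)
    (hsep : ∀ i, ρ ≤ y i * ∫ θ, deriv σ ⟪θ, x i⟫ * ⟪x i, v θ⟫ ∂μ₀)
    (β δ : ℝ)
    (hδ0 : 0 < δ)
    (hm : 16 * K₁ ^ 2 / ρ ^ 2 * Real.log (2 * n / δ) ≤ (2 * k : ℝ)) :
    ENNReal.ofReal (1 - δ) ≤
      (Measure.pi fun _ : Fin k => μ₀) {ω |
        ∀ Θ : Fin (2 * k) → EuclideanSpace ℝ (Fin d),
          n21 d (2 * k) (fun r => Θ r - symInit d k ω r) ≤ (2 * k : ℝ) * ρ / (4 * K₂) →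
          ρ ^ 2 / (16 * (2 * k : ℝ) ^ (2 * β - 1)) *
              (L1norm d (2 * k) n β σ (symSigns k) x y Θ) ^ 2 ≤
            Qker d (2 * k) n β σ (symSigns k) x y Θ} := by
  have hy₁ (i : Fin n) : |y i| = 1 := by rcases hy i with h | h <;> simp [h]
  have hLip := abs_sub_le_of_abs_deriv_le
    ((contDiff_succ_iff_deriv.mp hσ).2.2.differentiable one_ne_zero) hK₂
  have hgood := ofReal_one_sub_le_pi_forall_margin_ge hK₁ hx hy₁ hv_meas hv_norm hsep hρ
    (half_pos hδ0) hk
    (by rw [div_div_eq_mul_div, mul_comm (n : ℝ)]; linear_combination hm / 2)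
  refine (ENNReal.ofReal_le_ofReal (by linarith)).trans
    (hgood.trans (measure_mono fun ω hω Θ hΘ => ?_))
  have hK₂Θ : K₂ * n21 d (2 * k) (fun r => Θ r - symInit d k ω r) ≤ k * ρ / 2 := by
    rw [mul_comm]
    exact mul_le_of_le_div₀ (by positivity) ((abs_nonneg _).trans (hK₂ 0))
      (hΘ.trans_eq (by ring))
  have hmargin (i : Fin n) : ((2 * k : ℕ) : ℝ) * ρ / 4 ≤
      y i * ∑ r, deriv σ ⟪Θ r, x i⟫ * ⟪x i, v (symInit d k ω r)⟫ := by
    have := sub_le_mul_sum_of_near_symInit hLip (hx i) hv_norm (hy₁ i) ω Θ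
    push_cast
    linarith [hω i]
  have hQ := sq_mul_L1norm_le_mul_Qker (β := β) Θ (fun r => v (symInit d k ω r)) abs_symSigns
    (fun r => hv_norm _) hy₁ (by positivity) hmargin
  have hm₀ : (0 : ℝ) < 2 * k := by positivity
  have hscale (L : ℝ) : ((2 * k : ℝ) ^ (-β) * (2 * k * ρ / 4) * L) ^ 2 =
      2 * k * (ρ ^ 2 / (16 * (2 * k : ℝ) ^ (2 * β - 1)) * L ^ 2) := by
    rw [rpow_sub hm₀, rpow_one, rpow_neg hm₀.le, mul_comm 2 β, rpow_mul hm₀.le, rpow_two]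
    field_simp
    ring
  push_cast at hQ
  rw [hscale] at hQ
  exact le_of_mul_le_mul_left hQ hm₀

/-- Proposition 4: kernel positivity near the symmetric initialization. -/
theorem kernel_positivity
    (d n k : ℕ) (hk : 0 < k) (hn : 0 < n)
    (σ : ℝ → ℝ) (K₁ K₂ : ℝ)
    (hσ : ContDiff ℝ 2 σ)
    (hK₁ : ∀ z, |deriv σ z| ≤ K₁)
    (hK₂ : ∀ z, |deriv (deriv σ) z| ≤ K₂)
    (x : Fin n → EuclideanSpace ℝ (Fin d)) (y : Fin n → ℝ)
    (hx : ∀ i, ‖x i‖ ≤ 1) (hy : ∀ i, y i = 1 ∨ y i = -1)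
    (μ₀ : Measure (EuclideanSpace ℝ (Fin d))) [IsProbabilityMeasure μ₀]
    (ρ : ℝ) (hρ : 0 < ρ)
    (v : EuclideanSpace ℝ (Fin d) → EuclideanSpace ℝ (Fin d))
    (hv_meas : Measurable v) (hv_norm : ∀ θ, ‖v θ‖ ≤ 1)
    (hsep : ∀ i, ρ ≤ y i * ∫ θ, deriv σ ⟪θ, x i⟫ * ⟪x i, v θ⟫ ∂μ₀)
    (β δ : ℝ) (hβ0 : 0 ≤ β) (hβ1 : β < 1)
    (hδ0 : 0 < δ) (hδ1 : δ < 1)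
    (hm : 16 * K₁ ^ 2 / ρ ^ 2 * Real.log (2 * n / δ) ≤ (2 * k : ℝ)) :
    ENNReal.ofReal (1 - δ) ≤
      (Measure.pi fun _ : Fin k => μ₀) {ω |
        ∀ Θ : Fin (2 * k) → EuclideanSpace ℝ (Fin d),
          n21 d (2 * k) (fun r => Θ r - symInit d k ω r) ≤ (2 * k : ℝ) * ρ / (4 * K₂) →
          ρ ^ 2 / (16 * (2 * k : ℝ) ^ (2 * β - 1)) *
              (L1norm d (2 * k) n β σ (symSigns k) x y Θ) ^ 2 ≤
            Qker d (2 * k) n β σ (symSigns k) x y Θ} :=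
  kernel_positivity_general d n k hk σ K₁ K₂ hσ hK₁ hK₂ x y hx hy μ₀ ρ hρ v hv_meas hv_norm hsep β δ
    hδ0 hm
end
end

section
/- Let Θ = (θ_r)_{r=1}^m ∈ (ℝ^d)^m and suppose there exist vectors v_1, …, v_m ∈ ℝ^d with ‖v_r‖₂ ≤ 1 such that (1/m) Σ_{r=1}^m y_i σ′(θ_rᵀx_i)·x_iᵀv_r ≥ ρ/4 for every i ∈ {1, …, n}. Then the kernel-smoothing quantity satisfies Q(Θ) = ‖(1/n) Σ_{i=1}^n g_Θ(x_i)·∇_Θ f_Θ(x_i)‖₂² ≥ (ρ²/(16 m^{2β−1}))·‖∇_f L(f_Θ)‖_{L1}². -/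
open MeasureTheory Real Finset
open scoped RealInnerProductSpace BigOperators

noncomputable section

/-- pointwise margin lower bounds imply a lower bound on the
kernel-smoothing quantity `Q(Θ)`. -/
theorem margin_implies_Q_lower_bound
    (d m n : ℕ) (hm : 0 < m) (hn : 0 < n)
    (σ : ℝ → ℝ) (hσ : Differentiable ℝ σ)
    (a : Fin m → ℝ) (ha : ∀ r, a r = 1 ∨ a r = -1)
    (x : Fin n → EuclideanSpace ℝ (Fin d)) (y : Fin n → ℝ)
    (hx : ∀ i, ‖x i‖ ≤ 1) (hy : ∀ i, y i = 1 ∨ y i = -1)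
    (β ρ : ℝ) (hβ0 : 0 ≤ β) (hβ1 : β < 1) (hρ : 0 < ρ)
    (Θ : Fin m → EuclideanSpace ℝ (Fin d))
    (v : Fin m → EuclideanSpace ℝ (Fin d)) (hv : ∀ r, ‖v r‖ ≤ 1)
    (hmargin : ∀ i, ρ / 4 ≤ (1 / m : ℝ) * ∑ r, y i * deriv σ ⟪Θ r, x i⟫ * ⟪x i, v r⟫) :
    ρ ^ 2 / (16 * (m : ℝ) ^ (2 * β - 1)) * (L1norm d m n β σ a x y Θ) ^ 2 ≤
      Qker d m n β σ a x y Θ := by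
  classical
  have hmpos : (0:ℝ) < m := by exact_mod_cast hm
  have hnpos : (0:ℝ) < n := by exact_mod_cast hn
  set c : ℝ := (m:ℝ) ^ (-β) with hc
  have hcpos : 0 < c := Real.rpow_pos_of_pos hmpos _
  set g : Fin n → ℝ := gval d m n β σ a x y Θ with hgdef
  set G : Fin m → EuclideanSpace ℝ (Fin d) := fun r => (1 / n : ℝ) • ∑ i,
      (g i * (a r * c * deriv σ ⟪Θ r, x i⟫)) • x i with hGdef
  have hQ : Qker d m n β σ a x y Θ = ∑ r, ‖G r‖ ^ 2 := rfl
  set L : ℝ := L1norm d m n β σ a x y Θ with hLdef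
  have hL : 0 ≤ L := by
    rw [hLdef]
    unfold L1norm
    positivity
  have haa : ∀ r, a r * a r = 1 := by
    intro r; rcases ha r with h | h <;> rw [h] <;> norm_num
  have hgy : ∀ i, - g i = y i * |g i| := by
    intro i
    set E := Real.exp (y i * fnet d m β σ a Θ (x i)) with hE
    have hEpos : 0 < E := Real.exp_pos _
    have h1E : (0:ℝ) < 1 + E := by positivity
    have hge : g i = - y i / (1 + E) := rfl
    rcases hy i with h | h <;> rw [hge, h] <;> rw [abs_div, abs_of_pos h1E] <;> simp <;>
      field_simp
  -- exact value of the pairing S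
  have hinner : ∀ r, ⟪G r, v r⟫ =
      (1 / n : ℝ) * ∑ i, (g i * (a r * c * deriv σ ⟪Θ r, x i⟫)) * ⟪x i, v r⟫ := by
    intro r
    rw [hGdef]
    simp only [real_inner_smul_left, sum_inner]
  have hS_eq : ∑ r, (-(a r)) * ⟪G r, v r⟫ =
      (1 / n : ℝ) * ∑ i, |g i| *
        (c * ∑ r, y i * deriv σ ⟪Θ r, x i⟫ * ⟪x i, v r⟫) := by
    calc ∑ r, (-(a r)) * ⟪G r, v r⟫
        = (1 / n : ℝ) * ∑ r, ∑ i,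
            (-(a r)) * ((g i * (a r * c * deriv σ ⟪Θ r, x i⟫)) * ⟪x i, v r⟫) := by
          rw [Finset.mul_sum]
          refine Finset.sum_congr rfl fun r _ => ?_
          rw [hinner r, mul_left_comm, Finset.mul_sum]
      _ = (1 / n : ℝ) * ∑ i, ∑ r,
            (-(a r)) * ((g i * (a r * c * deriv σ ⟪Θ r, x i⟫)) * ⟪x i, v r⟫) := by
          rw [Finset.sum_comm]
      _ = (1 / n : ℝ) * ∑ i, |g i| *
            (c * ∑ r, y i * deriv σ ⟪Θ r, x i⟫ * ⟪x i, v r⟫) := by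
          congr 1
          refine Finset.sum_congr rfl fun i _ => ?_
          rw [Finset.mul_sum, Finset.mul_sum]
          refine Finset.sum_congr rfl fun r _ => ?_
          linear_combination (c * deriv σ ⟪Θ r, x i⟫ * ⟪x i, v r⟫) * hgy i +
            (-(g i) * c * deriv σ ⟪Θ r, x i⟫ * ⟪x i, v r⟫) * haa r
  -- lower bound on S
  have hS_lower : c * m * (ρ / 4) * L ≤ ∑ r, (-(a r)) * ⟪G r, v r⟫ := by
    rw [hS_eq]
    have hstep : ∀ i : Fin n, |g i| * (c * ((m:ℝ) * (ρ / 4))) ≤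
        |g i| * (c * ∑ r, y i * deriv σ ⟪Θ r, x i⟫ * ⟪x i, v r⟫) := by
      intro i
      have hmi := hmargin i
      have hsum : (m:ℝ) * (ρ / 4) ≤ ∑ r, y i * deriv σ ⟪Θ r, x i⟫ * ⟪x i, v r⟫ := by
        rw [div_mul_eq_mul_div, one_mul] at hmi
        calc (m:ℝ) * (ρ / 4) ≤ (m:ℝ) *
              ((∑ r, y i * deriv σ ⟪Θ r, x i⟫ * ⟪x i, v r⟫) / m) :=
            mul_le_mul_of_nonneg_left hmi (le_of_lt hmpos)
          _ = ∑ r, y i * deriv σ ⟪Θ r, x i⟫ * ⟪x i, v r⟫ := by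
            field_simp
      exact mul_le_mul_of_nonneg_left
        (mul_le_mul_of_nonneg_left hsum (le_of_lt hcpos)) (abs_nonneg _)
    calc c * m * (ρ / 4) * L
        = (1 / n : ℝ) * ∑ i, |g i| * (c * ((m:ℝ) * (ρ / 4))) := by
          rw [hLdef]; unfold L1norm
          rw [← Finset.sum_mul]
          ring
      _ ≤ (1 / n : ℝ) * ∑ i, |g i| *
            (c * ∑ r, y i * deriv σ ⟪Θ r, x i⟫ * ⟪x i, v r⟫) := by
          refine mul_le_mul_of_nonneg_left (Finset.sum_le_sum fun i _ => hstep i) ?_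
          positivity
  -- upper bound on S
  have hS_upper : ∑ r, (-(a r)) * ⟪G r, v r⟫ ≤ ∑ r, ‖G r‖ := by
    refine Finset.sum_le_sum fun r _ => ?_
    have habs : |a r| = 1 := by rcases ha r with h | h <;> rw [h] <;> norm_num
    calc (-(a r)) * ⟪G r, v r⟫ ≤ |(-(a r)) * ⟪G r, v r⟫| := le_abs_self _
      _ = |a r| * |⟪G r, v r⟫| := by rw [abs_mul, abs_neg]
      _ = |⟪G r, v r⟫| := by rw [habs, one_mul]
      _ ≤ ‖G r‖ * ‖v r‖ := abs_real_inner_le_norm _ _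
      _ ≤ ‖G r‖ * 1 := mul_le_mul_of_nonneg_left (hv r) (norm_nonneg _)
      _ = ‖G r‖ := mul_one _
  -- Cauchy-Schwarz over r
  have hCS : (∑ r, ‖G r‖) ^ 2 ≤ (m:ℝ) * ∑ r, ‖G r‖ ^ 2 := by
    have := sq_sum_le_card_mul_sum_sq (s := Finset.univ) (f := fun r : Fin m => ‖G r‖)
    simpa using this
  have hA_nonneg : 0 ≤ c * m * (ρ / 4) * L := by positivity
  have hchain : c * m * (ρ / 4) * L ≤ ∑ r, ‖G r‖ := le_trans hS_lower hS_upper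
  have hsq : (c * m * (ρ / 4) * L) ^ 2 ≤ (m:ℝ) * ∑ r, ‖G r‖ ^ 2 :=
    le_trans (pow_le_pow_left₀ hA_nonneg hchain 2) hCS
  have hkey : (m:ℝ) ^ (2 * β - 1) * (c ^ 2 * m) = 1 := by
    have h1 : c ^ 2 = (m:ℝ) ^ (-β + -β) := by
      rw [sq, hc, ← Real.rpow_add hmpos]
    have h2 : (m:ℝ) ^ (2 * β - 1) * (m:ℝ) ^ (-β + -β) = (m:ℝ) ^ (2 * β - 1 + (-β + -β)) :=
      (Real.rpow_add hmpos _ _).symm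
    have h3 : 2 * β - 1 + (-β + -β) = -1 := by ring
    rw [h1, ← mul_assoc, h2, h3, Real.rpow_neg_one]
    exact inv_mul_cancel₀ (ne_of_gt hmpos)
  have hMpos : (0:ℝ) < (m:ℝ) ^ (2 * β - 1) := Real.rpow_pos_of_pos hmpos _
  have heq : ρ ^ 2 / (16 * (m:ℝ) ^ (2 * β - 1)) = c ^ 2 * m * ρ ^ 2 / 16 := by
    rw [div_eq_div_iff (by positivity) (by norm_num)]
    linear_combination (-16 * ρ ^ 2) * hkey
  rw [hQ, heq]
  have hX : (c * m * (ρ / 4) * L) ^ 2 = (m:ℝ) * (c ^ 2 * m * ρ ^ 2 / 16 * L ^ 2) := by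
    ring
  rw [hX] at hsq
  exact le_of_mul_le_mul_left hsq hmpos
end
end
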